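/- arXiv:1605.02219 — 7 statements merged into one kernel-verified Lean document; each statement's English description precedes it below -/
import Mathlib

section
/- Let φ be the merging of positive maps φ₁, φ₂ by means of B_i, C_i, ω_i, and suppose φ is a positive map. Define ψ_i(X) = B_i X B_i* and χ_i(X) = C_i Xᵀ C_i* for X ∈ B(K_i). Then for i = 1,2: (1) φ_i − (ψ_i + χ_i) is a positive map; and (2) the range of B_i and the range of C_i are both contained in the range of φ_i(1). -/
open scoped ComplexOrder
open Matrix

noncomputable section
namespace Paper

/-- A map between matrix algebras is positive if it sends positive semidefinite
matrices to positive semidefinite matrices. -/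
def IsPosMap {m n : Type*} [Fintype m] [Fintype n]
    (φ : Matrix m m ℂ → Matrix n n ℂ) : Prop :=
  ∀ X : Matrix m m ℂ, X.PosSemidef → (φ X).PosSemidef

/-- The rank one operator `ηη*`, i.e. `ζ ↦ ⟨η, ζ⟩ η`. -/
def rankOne {m : Type*} (η : m → ℂ) : Matrix m m ℂ :=
  Matrix.vecMulVec η (star η)

/-- The Choi matrix `∑ E_{ij} ⊗ φ(E_{ij})` of a map `φ`. -/
def choi {m n : Type*} [Fintype m] [DecidableEq m]
    (φ : Matrix m m ℂ → Matrix n n ℂ) : Matrix (m × n) (m × n) ℂ :=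
  Matrix.of fun p q => φ (Matrix.single p.1 q.1 1) p.2 q.2

/-- A map is completely positive iff its Choi matrix is positive semidefinite. -/
def IsCP {m n : Type*} [Fintype m] [DecidableEq m] [Fintype n]
    (φ : Matrix m m ℂ → Matrix n n ℂ) : Prop :=
  (choi φ).PosSemidef

/-- A map is completely copositive iff `X ↦ φ(Xᵀ)` is completely positive. -/
def IsCCP {m n : Type*} [Fintype m] [DecidableEq m] [Fintype n]
    (φ : Matrix m m ℂ → Matrix n n ℂ) : Prop :=
  IsCP fun X => φ Xᵀ

/-- A map is decomposable iff it is the sum of a completely positive and a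
completely copositive (linear) map. -/
def Decomposable {m n : Type*} [Fintype m] [DecidableEq m] [Fintype n]
    (φ : Matrix m m ℂ → Matrix n n ℂ) : Prop :=
  ∃ φ₁ φ₂ : Matrix m m ℂ →ₗ[ℂ] Matrix n n ℂ,
    IsCP (⇑φ₁) ∧ IsCCP (⇑φ₂) ∧ ∀ X, φ X = φ₁ X + φ₂ X

/-- The ampliation `id_{M₂(ℂ)} ⊗ φ`. -/
def ampl2 {m n : Type*} (φ : Matrix m m ℂ → Matrix n n ℂ)
    (Y : Matrix (Fin 2 × m) (Fin 2 × m) ℂ) : Matrix (Fin 2 × n) (Fin 2 × n) ℂ :=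
  Matrix.of fun p q => φ (Matrix.of fun a b => Y (p.1, a) (q.1, b)) p.2 q.2

/-- The ampliation `tran_{M₂(ℂ)} ⊗ φ`. -/
def ampl2T {m n : Type*} (φ : Matrix m m ℂ → Matrix n n ℂ)
    (Y : Matrix (Fin 2 × m) (Fin 2 × m) ℂ) : Matrix (Fin 2 × n) (Fin 2 × n) ℂ :=
  Matrix.of fun p q => φ (Matrix.of fun a b => Y (q.1, a) (p.1, b)) p.2 q.2

/-- `φ` is 2-positive if `id_{M₂(ℂ)} ⊗ φ` is positive. -/
def Is2Pos {m n : Type*} [Fintype m] [Fintype n]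
    (φ : Matrix m m ℂ → Matrix n n ℂ) : Prop :=
  IsPosMap (ampl2 φ)

/-- `φ` is 2-copositive if `tran_{M₂(ℂ)} ⊗ φ` is positive. -/
def Is2Copos {m n : Type*} [Fintype m] [Fintype n]
    (φ : Matrix m m ℂ → Matrix n n ℂ) : Prop :=
  IsPosMap (ampl2T φ)

/-- A positive map `φ` is exposed if every positive (linear) map `ψ` vanishing
(in the sense `⟨y, ψ(ηη*) y⟩ = 0`) wherever `φ` vanishes is a nonnegative
multiple of `φ`. -/
def IsExposed {m n : Type*} [Fintype m] [Fintype n]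
    (φ : Matrix m m ℂ → Matrix n n ℂ) : Prop :=
  IsPosMap φ ∧
    ∀ ψ : Matrix m m ℂ →ₗ[ℂ] Matrix n n ℂ, IsPosMap ⇑ψ →
      (∀ (η : m → ℂ) (y : n → ℂ),
        star y ⬝ᵥ (φ (rankOne η)).mulVec y = 0 →
          star y ⬝ᵥ (ψ (rankOne η)).mulVec y = 0) →
      ∃ c : ℝ, 0 ≤ c ∧ ∀ X, ψ X = (c : ℂ) • φ X

/-- A positive map `φ` is optimal if there is no nonzero completely positive map
`ψ` with `φ − ψ` positive. -/
def IsOptimal {m n : Type*} [Fintype m] [DecidableEq m] [Fintype n]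
    (φ : Matrix m m ℂ → Matrix n n ℂ) : Prop :=
  ¬∃ ψ : Matrix m m ℂ →ₗ[ℂ] Matrix n n ℂ,
      ψ ≠ 0 ∧ IsCP (⇑ψ) ∧ IsPosMap fun X => φ X - ψ X

/-- The index type of the direct sum `ℂᵃ ⊕ ℂᵇ ⊕ ℂ`. -/
abbrev TI (a b : ℕ) := Fin a ⊕ (Fin b ⊕ Unit)

/-- The index of the distinguished one-dimensional summand. -/
def tidx {a b : ℕ} : TI a b := Sum.inr (Sum.inr ())

/-- Block `X₁₁` of a matrix on `ℂᵃ ⊕ ℂᵇ ⊕ ℂ`. -/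
def blk11 {a b : ℕ} (X : Matrix (TI a b) (TI a b) ℂ) : Matrix (Fin a) (Fin a) ℂ :=
  Matrix.of fun i j => X (Sum.inl i) (Sum.inl j)

/-- Block `X₂₂`. -/
def blk22 {a b : ℕ} (X : Matrix (TI a b) (TI a b) ℂ) : Matrix (Fin b) (Fin b) ℂ :=
  Matrix.of fun i j => X (Sum.inr (Sum.inl i)) (Sum.inr (Sum.inl j))

/-- Block `X₁₃`, viewed as a column vector. -/
def blk13 {a b : ℕ} (X : Matrix (TI a b) (TI a b) ℂ) : Fin a → ℂ :=
  fun i => X (Sum.inl i) tidx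

/-- Block `X₃₁` (equivalently, the vector `X₃₁ᵀ`). -/
def blk31 {a b : ℕ} (X : Matrix (TI a b) (TI a b) ℂ) : Fin a → ℂ :=
  fun i => X tidx (Sum.inl i)

/-- Block `X₂₃`, viewed as a column vector. -/
def blk23 {a b : ℕ} (X : Matrix (TI a b) (TI a b) ℂ) : Fin b → ℂ :=
  fun i => X (Sum.inr (Sum.inl i)) tidx

/-- Block `X₃₂` (equivalently, the vector `X₃₂ᵀ`). -/
def blk32 {a b : ℕ} (X : Matrix (TI a b) (TI a b) ℂ) : Fin b → ℂ :=
  fun i => X tidx (Sum.inr (Sum.inl i))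

/-- `P` is the orthogonal projection onto the range of `A`: it is Hermitian,
idempotent, and has the same range as `A`. -/
def IsOrthProjOnRange {n m : Type*} [Fintype n] [Fintype m]
    (P : Matrix n n ℂ) (A : Matrix n m ℂ) : Prop :=
  P.IsHermitian ∧ P * P = P ∧
    LinearMap.range P.mulVecLin = LinearMap.range A.mulVecLin

/-- The merging of the maps `φ₁`, `φ₂` by means of the operators `B₁, C₁, B₂, C₂`,
the functionals `ω₁, ω₂`, with `P₁, P₂` the orthogonal projections onto the ranges
of `φ₁(1)`, `φ₂(1)`. -/
def merging {k₁ k₂ h₁ h₂ : ℕ}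
    (φ₁ : Matrix (Fin k₁) (Fin k₁) ℂ →ₗ[ℂ] Matrix (Fin h₁) (Fin h₁) ℂ)
    (φ₂ : Matrix (Fin k₂) (Fin k₂) ℂ →ₗ[ℂ] Matrix (Fin h₂) (Fin h₂) ℂ)
    (B₁ C₁ : Matrix (Fin h₁) (Fin k₁) ℂ) (B₂ C₂ : Matrix (Fin h₂) (Fin k₂) ℂ)
    (ω₁ : Matrix (Fin k₁) (Fin k₁) ℂ →ₗ[ℂ] ℂ) (ω₂ : Matrix (Fin k₂) (Fin k₂) ℂ →ₗ[ℂ] ℂ)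
    (P₁ : Matrix (Fin h₁) (Fin h₁) ℂ) (P₂ : Matrix (Fin h₂) (Fin h₂) ℂ)
    (X : Matrix (TI k₁ k₂) (TI k₁ k₂) ℂ) : Matrix (TI h₁ h₂) (TI h₁ h₂) ℂ :=
  Matrix.of fun p q =>
    match p, q with
    | Sum.inl a, Sum.inl b => φ₁ (blk11 X) a b + ω₂ (blk22 X) * P₁ a b
    | Sum.inl _, Sum.inr (Sum.inl _) => 0
    | Sum.inl a, Sum.inr (Sum.inr _) => (B₁.mulVec (blk13 X) + C₁.mulVec (blk31 X)) a
    | Sum.inr (Sum.inl _), Sum.inl _ => 0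
    | Sum.inr (Sum.inl a), Sum.inr (Sum.inl b) => φ₂ (blk22 X) a b + ω₁ (blk11 X) * P₂ a b
    | Sum.inr (Sum.inl a), Sum.inr (Sum.inr _) => (B₂.mulVec (blk23 X) + C₂.mulVec (blk32 X)) a
    | Sum.inr (Sum.inr _), Sum.inl b =>
        (Matrix.vecMul (blk31 X) B₁ᴴ + Matrix.vecMul (blk13 X) C₁ᴴ) b
    | Sum.inr (Sum.inr _), Sum.inr (Sum.inl b) =>
        (Matrix.vecMul (blk32 X) B₂ᴴ + Matrix.vecMul (blk23 X) C₂ᴴ) b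
    | Sum.inr (Sum.inr _), Sum.inr (Sum.inr _) => X tidx tidx

/-- The quantity `μᵢ(η, y) = √⟨y, φᵢ(ηη*) y⟩`. -/
def muQ {k h : ℕ} (φ : Matrix (Fin k) (Fin k) ℂ →ₗ[ℂ] Matrix (Fin h) (Fin h) ℂ)
    (η : Fin k → ℂ) (y : Fin h → ℂ) : ℝ :=
  Real.sqrt (star y ⬝ᵥ (φ (rankOne η)).mulVec y).re

/-- The quantity `εᵢ(η, y) = |⟨y, Bη⟩| + |⟨y, C η̄⟩|`. -/
def epsQ {k h : ℕ} (B C : Matrix (Fin h) (Fin k) ℂ) (η : Fin k → ℂ) (y : Fin h → ℂ) : ℝ :=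
  ‖star y ⬝ᵥ B.mulVec η‖ + ‖star y ⬝ᵥ C.mulVec (star η)‖

/-- The quantity `δᵢ(η, y) = √(μᵢ(η,y)² − εᵢ(η,y)²)`. -/
def deltaQ {k h : ℕ} (φ : Matrix (Fin k) (Fin k) ℂ →ₗ[ℂ] Matrix (Fin h) (Fin h) ℂ)
    (B C : Matrix (Fin h) (Fin k) ℂ) (η : Fin k → ℂ) (y : Fin h → ℂ) : ℝ :=
  Real.sqrt (muQ φ η y ^ 2 - epsQ B C η y ^ 2)

/-- The quantity `σᵢ(η, y) = √(ωᵢ(ηη*))·‖P y‖`. -/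
def sigmaQ {k h : ℕ} (ω : Matrix (Fin k) (Fin k) ℂ →ₗ[ℂ] ℂ)
    (P : Matrix (Fin h) (Fin h) ℂ) (η : Fin k → ℂ) (y : Fin h → ℂ) : ℝ :=
  Real.sqrt (ω (rankOne η)).re * Real.sqrt (star (P.mulVec y) ⬝ᵥ P.mulVec y).re

/-!
Testing the positivity of the merging on `ξξ*` with `ξ = η ⊕ 0 ⊕ t` against `ŷ = y ⊕ 0 ⊕ z` gives
`⟨y, φ₁(ηη*) y⟩ + 2 Re ((t̄ ⟨y, B₁η⟩ + t ⟨y, C₁η̄⟩) z) + |z|² |t|² ≥ 0`.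
Choosing `z` optimally and adding the resulting bounds for `t = 1` and `t = i` yields
`|⟨y, B₁η⟩|² + |⟨y, C₁η̄⟩|² ≤ ⟨y, φ₁(ηη*) y⟩`, i.e. `φ₁ - ψ₁ - χ₁` is positive on the rank one
matrices `ηη*`, hence positive, as every positive semidefinite matrix is a sum of those.
At `X = 1` this reads `B₁B₁* + C₁C₁* ≤ φ₁(1)`, so the kernel of `φ₁(1)` is killed by `B₁*` and
`C₁*`, which gives the range inclusions. The merging is symmetric under
exchanging the two summands, so the same argument applies to `φ₂`.
-/

open ComplexConjugate

section RankOne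

variable {m n : Type*} [Fintype m] [Fintype n]

theorem posSemidef_of_forall_dotProduct_mulVec_nonneg {M : Matrix n n ℂ}
    (h : ∀ x, 0 ≤ star x ⬝ᵥ M *ᵥ x) : M.PosSemidef := by
  classical
  rw [← Matrix.isPositive_toEuclideanLin_iff, LinearMap.isPositive_iff_complex]
  intro x
  have hx := Complex.nonneg_iff.mp (h x)
  simp only [EuclideanSpace.inner_eq_star_dotProduct, Matrix.ofLp_toLpLin, Matrix.toLin'_apply]
  rw [dotProduct_comm, star_dotProduct]
  exact ⟨Complex.ext (by simp) (by simp [← hx.2]), by simpa using hx.1⟩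

theorem rankOne_posSemidef (η : m → ℂ) : (rankOne η).PosSemidef :=
  posSemidef_vecMulVec_self_star η

omit [Fintype m] in
theorem transpose_rankOne (η : m → ℂ) : (rankOne η)ᵀ = rankOne (star η) := by
  simp [rankOne, transpose_vecMulVec]

omit [Fintype n] in
theorem mul_rankOne_mul_conjTranspose (B : Matrix n m ℂ) (η : m → ℂ) :
    B * rankOne η * Bᴴ = rankOne (B *ᵥ η) := by
  rw [rankOne, rankOne, mul_vecMulVec, vecMulVec_mul, star_mulVec]

theorem star_dotProduct_rankOne_mulVec (η y : m → ℂ) :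
    star y ⬝ᵥ rankOne η *ᵥ y = Complex.normSq (star y ⬝ᵥ η) := by
  rw [rankOne, vecMulVec_mulVec, dotProduct_smul, star_dotProduct, op_smul_eq_mul,
    Complex.star_def, Complex.mul_conj]

theorem posSemidef_sub_rankOne_add_rankOne {A : Matrix n n ℂ} {u v : n → ℂ}
    (h : ∀ x, ((Complex.normSq (star x ⬝ᵥ u) + Complex.normSq (star x ⬝ᵥ v) : ℝ) : ℂ) ≤
      star x ⬝ᵥ A *ᵥ x) :
    (A - (rankOne u + rankOne v)).PosSemidef :=
  posSemidef_of_forall_dotProduct_mulVec_nonneg fun x => by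
    rw [sub_mulVec, add_mulVec, dotProduct_sub, dotProduct_add, star_dotProduct_rankOne_mulVec,
      star_dotProduct_rankOne_mulVec, sub_nonneg]
    exact_mod_cast h x

theorem IsPosMap.of_rankOne {F : Matrix m m ℂ → Matrix n n ℂ}
    (hF : ∀ X Y, F (X + Y) = F X + F Y) (h : ∀ η, (F (rankOne η)).PosSemidef) :
    IsPosMap F := by
  intro X hX
  obtain ⟨r, v, rfl⟩ := Matrix.posSemidef_iff_eq_sum_vecMulVec.mp hX
  rw [show F = AddMonoidHom.mk' F hF from rfl, map_sum]
  exact posSemidef_sum _ fun i _ => h (v i)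

end RankOne

section Range

variable {m n : Type*} [Fintype m] [Fintype n]

theorem conjTranspose_mulVec_eq_zero_of_posSemidef_sub {A : Matrix n n ℂ} {B : Matrix n m ℂ}
    (hAB : (A - B * Bᴴ).PosSemidef) {y : n → ℂ} (hy : A *ᵥ y = 0) : Bᴴ *ᵥ y = 0 := by
  have h := hAB.dotProduct_mulVec_nonneg y
  rw [sub_mulVec, dotProduct_sub, hy, dotProduct_zero, zero_sub, ← mulVec_mulVec,
    dotProduct_mulVec, ← conjTranspose_conjTranspose B, ← star_mulVec, conjTranspose_conjTranspose,
    neg_nonneg] at h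
  exact dotProduct_star_self_eq_zero.mp (le_antisymm h (dotProduct_star_self_nonneg _))

theorem range_le_range_of_posSemidef_sub {A P : Matrix n n ℂ} {B : Matrix n m ℂ}
    (hAB : (A - B * Bᴴ).PosSemidef) (hP : IsOrthProjOnRange P A) :
    LinearMap.range B.mulVecLin ≤ LinearMap.range A.mulVecLin := by
  obtain ⟨hPh, hPP, hPA⟩ := hP
  have hA : A.IsHermitian := by
    simpa using hAB.1.add (posSemidef_self_mul_conjTranspose B).1
  have hPA' : P * A = A := ext_iff_mulVec.mpr fun x => by
    obtain ⟨u, hu⟩ : A *ᵥ x ∈ LinearMap.range P.mulVecLin := hPA ▸ ⟨x, rfl⟩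
    rw [← mulVec_mulVec, ← mulVecLin_apply, ← hu, mulVecLin_apply, mulVecLin_apply,
      mulVec_mulVec, hPP]
  have hAP : A * P = A := by
    simpa only [conjTranspose_mul, hPh.eq, hA.eq] using congrArg conjTranspose hPA'
  have hBP : Bᴴ * P = Bᴴ := ext_iff_mulVec.mpr fun y => by
    have h := conjTranspose_mulVec_eq_zero_of_posSemidef_sub hAB (y := y - P *ᵥ y)
      (by rw [mulVec_sub, mulVec_mulVec, hAP, sub_self])
    rw [mulVec_sub, mulVec_mulVec, sub_eq_zero] at h
    exact h.symm
  have hPB : P * B = B := by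
    simpa only [conjTranspose_mul, conjTranspose_conjTranspose, hPh.eq] using
      congrArg conjTranspose hBP
  rw [← hPA]
  rintro _ ⟨v, rfl⟩
  exact ⟨B *ᵥ v, by simp [mulVec_mulVec, hPB]⟩

theorem range_le_of_isPosMap_sub [DecidableEq m] {φ : Matrix m m ℂ → Matrix n n ℂ}
    {B C : Matrix n m ℂ} {P : Matrix n n ℂ}
    (hφ : IsPosMap fun X => φ X - (B * X * Bᴴ + C * Xᵀ * Cᴴ)) (hP : IsOrthProjOnRange P (φ 1)) :
    LinearMap.range B.mulVecLin ≤ LinearMap.range (φ 1).mulVecLin ∧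
      LinearMap.range C.mulVecLin ≤ LinearMap.range (φ 1).mulVecLin := by
  have h₁ : (φ 1 - (B * Bᴴ + C * Cᴴ)).PosSemidef := by
    simpa only [Matrix.mul_one, transpose_one] using hφ 1 PosSemidef.one
  refine ⟨range_le_range_of_posSemidef_sub ?_ hP, range_le_range_of_posSemidef_sub ?_ hP⟩
  · convert h₁.add (posSemidef_self_mul_conjTranspose C) using 1; abel
  · convert h₁.add (posSemidef_self_mul_conjTranspose B) using 1; abel

end Range

theorem ofReal_normSq_add_normSq_le_of_forall {q a b : ℂ}
    (h : ∀ t z : ℂ, 0 ≤ q + (conj t * a + t * b) * z + conj ((conj t * a + t * b) * z)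
      + Complex.normSq z * Complex.normSq t) :
    ((Complex.normSq a + Complex.normSq b : ℝ) : ℂ) ≤ q := by
  have h₀ := h 0 0
  have h₁ := h 1 (-conj (a + b))
  have h₂ := h Complex.I (Complex.I * conj (b - a))
  simp only [map_zero, zero_mul, add_zero, map_one, Complex.conj_I] at h₀ h₁ h₂
  rw [Complex.le_def] at h₀ h₁ h₂ ⊢
  simp only [Complex.normSq_apply, Complex.add_re, Complex.add_im, Complex.mul_re, Complex.mul_im,
    Complex.neg_re, Complex.neg_im, Complex.conj_re, Complex.conj_im, Complex.sub_re,
    Complex.sub_im, Complex.I_re, Complex.I_im, Complex.ofReal_re, Complex.ofReal_im,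
    Complex.zero_re, Complex.zero_im, Complex.one_re, Complex.one_im] at h₀ h₁ h₂ ⊢
  exact ⟨by linarith [h₁.1, h₂.1], by linarith [h₀.2]⟩

def TI.swap {a b : ℕ} : TI a b ≃ TI b a :=
  (Equiv.sumAssoc _ _ _).symm.trans
    (((Equiv.sumComm _ _).sumCongr (Equiv.refl Unit)).trans (Equiv.sumAssoc _ _ _))

section Merging

variable {k₁ k₂ h₁ h₂ : ℕ}
  (φ₁ : Matrix (Fin k₁) (Fin k₁) ℂ →ₗ[ℂ] Matrix (Fin h₁) (Fin h₁) ℂ)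
  (φ₂ : Matrix (Fin k₂) (Fin k₂) ℂ →ₗ[ℂ] Matrix (Fin h₂) (Fin h₂) ℂ)
  (B₁ C₁ : Matrix (Fin h₁) (Fin k₁) ℂ) (B₂ C₂ : Matrix (Fin h₂) (Fin k₂) ℂ)
  (ω₁ : Matrix (Fin k₁) (Fin k₁) ℂ →ₗ[ℂ] ℂ) (ω₂ : Matrix (Fin k₂) (Fin k₂) ℂ →ₗ[ℂ] ℂ)
  (P₁ : Matrix (Fin h₁) (Fin h₁) ℂ) (P₂ : Matrix (Fin h₂) (Fin h₂) ℂ)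

theorem merging_swap (X : Matrix (TI k₂ k₁) (TI k₂ k₁) ℂ) :
    merging φ₂ φ₁ B₂ C₂ B₁ C₁ ω₂ ω₁ P₂ P₁ X =
      (merging φ₁ φ₂ B₁ C₁ B₂ C₂ ω₁ ω₂ P₁ P₂ (X.submatrix TI.swap TI.swap)).submatrix
        TI.swap TI.swap := by
  ext (p | p | p) (q | q | q) <;> rfl

variable {φ₁ φ₂ B₁ C₁ B₂ C₂ ω₁ ω₂ P₁ P₂} in
theorem IsPosMap.merging_swap (hpos : IsPosMap (merging φ₁ φ₂ B₁ C₁ B₂ C₂ ω₁ ω₂ P₁ P₂)) :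
    IsPosMap (merging φ₂ φ₁ B₂ C₂ B₁ C₁ ω₂ ω₁ P₂ P₁) := fun X hX => by
  rw [Paper.merging_swap]
  exact (hpos _ (hX.submatrix _)).submatrix _

theorem star_dotProduct_merging_rankOne_mulVec (η : Fin k₁ → ℂ) (y : Fin h₁ → ℂ) (t z : ℂ) :
    star (Sum.elim y (Sum.elim 0 fun _ => z) : TI h₁ h₂ → ℂ) ⬝ᵥ
        merging φ₁ φ₂ B₁ C₁ B₂ C₂ ω₁ ω₂ P₁ P₂
          (rankOne (Sum.elim η (Sum.elim 0 fun _ => t))) *ᵥ Sum.elim y (Sum.elim 0 fun _ => z) =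
      star y ⬝ᵥ φ₁ (rankOne η) *ᵥ y
        + (conj t * (star y ⬝ᵥ B₁ *ᵥ η) + t * (star y ⬝ᵥ C₁ *ᵥ star η)) * z
        + conj ((conj t * (star y ⬝ᵥ B₁ *ᵥ η) + t * (star y ⬝ᵥ C₁ *ᵥ star η)) * z)
        + Complex.normSq z * Complex.normSq t := by
  set ξ : TI k₁ k₂ → ℂ := Sum.elim η (Sum.elim 0 fun _ => t)
  have h11 : blk11 (rankOne ξ) = rankOne η := by ext i j; simp [ξ, blk11, rankOne, vecMulVec]
  have h22 : blk22 (rankOne ξ) = 0 := by ext i j; simp [ξ, blk22, rankOne, vecMulVec]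
  have h13 : blk13 (rankOne ξ) = conj t • η := by
    ext i; simp [ξ, blk13, rankOne, vecMulVec, tidx, mul_comm]
  have h31 : blk31 (rankOne ξ) = t • star η := by ext i; simp [ξ, blk31, rankOne, vecMulVec, tidx]
  have h33 : rankOne ξ tidx tidx = Complex.normSq t := by
    simp [ξ, rankOne, vecMulVec, tidx, Complex.mul_conj]
  have hblocks : star (Sum.elim y (Sum.elim 0 fun _ => z) : TI h₁ h₂ → ℂ) ⬝ᵥ
        merging φ₁ φ₂ B₁ C₁ B₂ C₂ ω₁ ω₂ P₁ P₂ (rankOne ξ) *ᵥ Sum.elim y (Sum.elim 0 fun _ => z) =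
      star y ⬝ᵥ φ₁ (rankOne η) *ᵥ y + (star y ⬝ᵥ (B₁ *ᵥ (conj t • η) + C₁ *ᵥ (t • star η))) * z
        + star z * (((t • star η) ᵥ* B₁ᴴ + (conj t • η) ᵥ* C₁ᴴ) ⬝ᵥ y)
        + star z * Complex.normSq t * z := by
    simp only [dotProduct, mulVec, Fintype.sum_sum_type, merging, of_apply, Sum.elim_inl,
      Sum.elim_inr, Pi.star_apply, Pi.zero_apply, star_zero, zero_mul, mul_zero,
      Finset.sum_const_zero, add_zero, zero_add, h11, h22, h13, h31, h33, map_zero,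
      Finset.univ_unique, Finset.sum_singleton, mul_add, Finset.sum_add_distrib, Finset.sum_mul,
      mul_assoc]
    ring
  rw [hblocks, dotProduct_add, mulVec_smul, mulVec_smul, dotProduct_smul, dotProduct_smul,
    add_dotProduct, smul_vecMul, smul_vecMul, smul_dotProduct, smul_dotProduct, ← star_mulVec,
    ← star_star η, ← star_mulVec, star_star, star_dotProduct (B₁ *ᵥ η) y,
    star_dotProduct (C₁ *ᵥ star η) y]
  simp only [smul_eq_mul, map_add, map_mul, Complex.conj_conj, Complex.star_def]
  rw [← Complex.mul_conj z]
  ring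

variable {φ₁ φ₂ B₁ C₁ B₂ C₂ ω₁ ω₂ P₁ P₂}

theorem ofReal_normSq_add_normSq_le_of_isPosMap_merging
    (hpos : IsPosMap (merging φ₁ φ₂ B₁ C₁ B₂ C₂ ω₁ ω₂ P₁ P₂)) (η : Fin k₁ → ℂ) (y : Fin h₁ → ℂ) :
    ((Complex.normSq (star y ⬝ᵥ B₁ *ᵥ η) + Complex.normSq (star y ⬝ᵥ C₁ *ᵥ star η) : ℝ) : ℂ) ≤
      star y ⬝ᵥ φ₁ (rankOne η) *ᵥ y :=
  ofReal_normSq_add_normSq_le_of_forall fun t z => by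
    rw [← star_dotProduct_merging_rankOne_mulVec (h₂ := h₂)]
    exact (hpos _ (rankOne_posSemidef _)).dotProduct_mulVec_nonneg _

theorem isPosMap_sub_of_isPosMap_merging
    (hpos : IsPosMap (merging φ₁ φ₂ B₁ C₁ B₂ C₂ ω₁ ω₂ P₁ P₂)) :
    IsPosMap fun X : Matrix (Fin k₁) (Fin k₁) ℂ => φ₁ X - (B₁ * X * B₁ᴴ + C₁ * Xᵀ * C₁ᴴ) := by
  refine IsPosMap.of_rankOne (fun X Y => ?_) fun η => ?_
  · simp only [map_add, transpose_add, Matrix.mul_add, Matrix.add_mul]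
    abel
  · rw [transpose_rankOne, mul_rankOne_mul_conjTranspose, mul_rankOne_mul_conjTranspose]
    exact posSemidef_sub_rankOne_add_rankOne
      (ofReal_normSq_add_normSq_le_of_isPosMap_merging hpos η)

end Merging

theorem statement1_general {k₁ k₂ h₁ h₂ : ℕ}
    (φ₁ : Matrix (Fin k₁) (Fin k₁) ℂ →ₗ[ℂ] Matrix (Fin h₁) (Fin h₁) ℂ)
    (φ₂ : Matrix (Fin k₂) (Fin k₂) ℂ →ₗ[ℂ] Matrix (Fin h₂) (Fin h₂) ℂ)
    (B₁ C₁ : Matrix (Fin h₁) (Fin k₁) ℂ) (B₂ C₂ : Matrix (Fin h₂) (Fin k₂) ℂ)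
    (ω₁ : Matrix (Fin k₁) (Fin k₁) ℂ →ₗ[ℂ] ℂ) (ω₂ : Matrix (Fin k₂) (Fin k₂) ℂ →ₗ[ℂ] ℂ)
    (P₁ : Matrix (Fin h₁) (Fin h₁) ℂ) (P₂ : Matrix (Fin h₂) (Fin h₂) ℂ)
    (hP₁ : IsOrthProjOnRange P₁ (φ₁ 1)) (hP₂ : IsOrthProjOnRange P₂ (φ₂ 1))
    (hpos : IsPosMap (merging φ₁ φ₂ B₁ C₁ B₂ C₂ ω₁ ω₂ P₁ P₂)) :
    (IsPosMap (fun X : Matrix (Fin k₁) (Fin k₁) ℂ =>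
        φ₁ X - (B₁ * X * B₁ᴴ + C₁ * Xᵀ * C₁ᴴ)) ∧
      IsPosMap (fun X : Matrix (Fin k₂) (Fin k₂) ℂ =>
        φ₂ X - (B₂ * X * B₂ᴴ + C₂ * Xᵀ * C₂ᴴ))) ∧
    ((LinearMap.range B₁.mulVecLin ≤ LinearMap.range (φ₁ 1).mulVecLin ∧
        LinearMap.range C₁.mulVecLin ≤ LinearMap.range (φ₁ 1).mulVecLin) ∧
      (LinearMap.range B₂.mulVecLin ≤ LinearMap.range (φ₂ 1).mulVecLin ∧
        LinearMap.range C₂.mulVecLin ≤ LinearMap.range (φ₂ 1).mulVecLin)) := by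
  have h₁ := isPosMap_sub_of_isPosMap_merging hpos
  have h₂ := isPosMap_sub_of_isPosMap_merging hpos.merging_swap
  exact ⟨⟨h₁, h₂⟩, range_le_of_isPosMap_sub h₁ hP₁, range_le_of_isPosMap_sub h₂ hP₂⟩

/-- If the merging of positive maps `φ₁`, `φ₂` by means of
`Bᵢ, Cᵢ, ωᵢ` is positive, then `φᵢ − (ψᵢ + χᵢ)` is positive, where
`ψᵢ(X) = BᵢXBᵢ*` and `χᵢ(X) = CᵢXᵀCᵢ*`, and the ranges of `Bᵢ` and `Cᵢ` are
contained in the range of `φᵢ(1)`. -/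
theorem statement1 {k₁ k₂ h₁ h₂ : ℕ}
    (φ₁ : Matrix (Fin k₁) (Fin k₁) ℂ →ₗ[ℂ] Matrix (Fin h₁) (Fin h₁) ℂ)
    (φ₂ : Matrix (Fin k₂) (Fin k₂) ℂ →ₗ[ℂ] Matrix (Fin h₂) (Fin h₂) ℂ)
    (hφ₁ : IsPosMap ⇑φ₁) (hφ₂ : IsPosMap ⇑φ₂)
    (B₁ C₁ : Matrix (Fin h₁) (Fin k₁) ℂ) (B₂ C₂ : Matrix (Fin h₂) (Fin k₂) ℂ)
    (ω₁ : Matrix (Fin k₁) (Fin k₁) ℂ →ₗ[ℂ] ℂ) (ω₂ : Matrix (Fin k₂) (Fin k₂) ℂ →ₗ[ℂ] ℂ)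
    (P₁ : Matrix (Fin h₁) (Fin h₁) ℂ) (P₂ : Matrix (Fin h₂) (Fin h₂) ℂ)
    (hP₁ : IsOrthProjOnRange P₁ (φ₁ 1)) (hP₂ : IsOrthProjOnRange P₂ (φ₂ 1))
    (hpos : IsPosMap (merging φ₁ φ₂ B₁ C₁ B₂ C₂ ω₁ ω₂ P₁ P₂)) :
    (IsPosMap (fun X : Matrix (Fin k₁) (Fin k₁) ℂ =>
        φ₁ X - (B₁ * X * B₁ᴴ + C₁ * Xᵀ * C₁ᴴ)) ∧
      IsPosMap (fun X : Matrix (Fin k₂) (Fin k₂) ℂ =>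
        φ₂ X - (B₂ * X * B₂ᴴ + C₂ * Xᵀ * C₂ᴴ))) ∧
    ((LinearMap.range B₁.mulVecLin ≤ LinearMap.range (φ₁ 1).mulVecLin ∧
        LinearMap.range C₁.mulVecLin ≤ LinearMap.range (φ₁ 1).mulVecLin) ∧
      (LinearMap.range B₂.mulVecLin ≤ LinearMap.range (φ₂ 1).mulVecLin ∧
        LinearMap.range C₂.mulVecLin ≤ LinearMap.range (φ₂ 1).mulVecLin)) :=
  statement1_general φ₁ φ₂ B₁ C₁ B₂ C₂ ω₁ ω₂ P₁ P₂ hP₁ hP₂ hpos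

end Paper
end
end

section
/- For any finite-dimensional complex Hilbert spaces K₁, K₂, the map φ_{K₁,K₂} : B(K₁ ⊕ K₂ ⊕ ℂ) → B(K₁ ⊕ K₂ ⊕ ℂ) defined blockwise by φ(X)₁₁ = X₁₁ + Tr(X₂₂)·1, φ(X)₂₂ = X₂₂ᵀ + Tr(X₁₁)·1, φ(X)₁₃ = X₁₃, φ(X)₂₃ = X₃₂ᵀ, φ(X)₃₁ = X₃₁, φ(X)₃₂ = X₂₃ᵀ, φ(X)₃₃ = X₃₃, φ(X)₁₂ = φ(X)₂₁ = 0, is a positive map. -/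
open scoped ComplexOrder
open Matrix

noncomputable section
namespace Paper

/-- The map `φ_{K₁,K₂}` given blockwise by `φ(X)₁₁ = X₁₁ + Tr(X₂₂)·1`,
`φ(X)₂₂ = X₂₂ᵀ + Tr(X₁₁)·1`, `φ(X)₁₃ = X₁₃`, `φ(X)₂₃ = X₃₂ᵀ`, `φ(X)₃₁ = X₃₁`,
`φ(X)₃₂ = X₂₃ᵀ`, `φ(X)₃₃ = X₃₃`, `φ(X)₁₂ = φ(X)₂₁ = 0`. -/
def phiMO (k₁ k₂ : ℕ) (X : Matrix (TI k₁ k₂) (TI k₁ k₂) ℂ) :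
    Matrix (TI k₁ k₂) (TI k₁ k₂) ℂ :=
  Matrix.of fun p q =>
    match p, q with
    | Sum.inl a, Sum.inl b =>
        X (Sum.inl a) (Sum.inl b) +
          (if a = b then ∑ i : Fin k₂, X (Sum.inr (Sum.inl i)) (Sum.inr (Sum.inl i)) else 0)
    | Sum.inl _, Sum.inr (Sum.inl _) => 0
    | Sum.inl a, Sum.inr (Sum.inr _) => X (Sum.inl a) tidx
    | Sum.inr (Sum.inl _), Sum.inl _ => 0
    | Sum.inr (Sum.inl a), Sum.inr (Sum.inl b) =>
        X (Sum.inr (Sum.inl b)) (Sum.inr (Sum.inl a)) +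
          (if a = b then ∑ i : Fin k₁, X (Sum.inl i) (Sum.inl i) else 0)
    | Sum.inr (Sum.inl a), Sum.inr (Sum.inr _) => X tidx (Sum.inr (Sum.inl a))
    | Sum.inr (Sum.inr _), Sum.inl b => X tidx (Sum.inl b)
    | Sum.inr (Sum.inr _), Sum.inr (Sum.inl b) => X (Sum.inr (Sum.inl b)) tidx
    | Sum.inr (Sum.inr _), Sum.inr (Sum.inr _) => X tidx tidx

/-- The map `Ω_{K₁,K₂}` given blockwise by `Ω(X)₁₁ = (Tr X₁₁ + Tr X₂₂)·1`,
`Ω(X)₂₂ = X₂₂ᵀ + Tr(X₁₁)·1`, `Ω(X)₁₃ = X₁₃`, `Ω(X)₂₃ = X₃₂ᵀ`, `Ω(X)₃₁ = X₃₁`,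
`Ω(X)₃₂ = X₂₃ᵀ`, `Ω(X)₃₃ = X₃₃`, `Ω(X)₁₂ = Ω(X)₂₁ = 0`. -/
def OmegaMap (k₁ k₂ : ℕ) (X : Matrix (TI k₁ k₂) (TI k₁ k₂) ℂ) :
    Matrix (TI k₁ k₂) (TI k₁ k₂) ℂ :=
  Matrix.of fun p q =>
    match p, q with
    | Sum.inl a, Sum.inl b =>
        if a = b then
          (∑ i : Fin k₁, X (Sum.inl i) (Sum.inl i)) +
            ∑ i : Fin k₂, X (Sum.inr (Sum.inl i)) (Sum.inr (Sum.inl i))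
        else 0
    | Sum.inl _, Sum.inr (Sum.inl _) => 0
    | Sum.inl a, Sum.inr (Sum.inr _) => X (Sum.inl a) tidx
    | Sum.inr (Sum.inl _), Sum.inl _ => 0
    | Sum.inr (Sum.inl a), Sum.inr (Sum.inl b) =>
        X (Sum.inr (Sum.inl b)) (Sum.inr (Sum.inl a)) +
          (if a = b then ∑ i : Fin k₁, X (Sum.inl i) (Sum.inl i) else 0)
    | Sum.inr (Sum.inl a), Sum.inr (Sum.inr _) => X tidx (Sum.inr (Sum.inl a))
    | Sum.inr (Sum.inr _), Sum.inl b => X tidx (Sum.inl b)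
    | Sum.inr (Sum.inr _), Sum.inr (Sum.inl b) => X (Sum.inr (Sum.inl b)) tidx
    | Sum.inr (Sum.inr _), Sum.inr (Sum.inr _) => X tidx tidx

/-!
Every positive semidefinite `X` is a sum of rank-one matrices `ξξ*` and `φ` is additive, so it
suffices to take `X = ξξ*` with `ξ = (x, y, z)`. For `v = (v₁, v₂, v₃)` the quadratic form of
`φ(ξξ*)` is `|α|² + |β|² + 2 Re(αc) + 2 Re(βc') + |c|² + ‖v₁‖²‖y‖² + ‖v₂‖²‖x‖²`, where
`α = ⟨v₁, x⟩`, `β = Σᵢ yᵢ v₂ᵢ` and `|c| = |c'| = |z v₃|`. Cauchy–Schwarz bounds `|α|` by `‖v₁‖‖x‖`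
and `|β|` by `‖y‖‖v₂‖`, so by AM–GM the trace terms dominate `2|α||β|`, and the form is at least
`(|c| - |α| - |β|)² ≥ 0`.
-/

open ComplexConjugate

theorem norm_dotProduct_sq_le {ι 𝕜 : Type*} [Fintype ι] [NormedField 𝕜] (u w : ι → 𝕜) :
    ‖u ⬝ᵥ w‖ ^ 2 ≤ (∑ i, ‖u i‖ ^ 2) * ∑ i, ‖w i‖ ^ 2 :=
  calc ‖u ⬝ᵥ w‖ ^ 2 ≤ (∑ i, ‖u i‖ * ‖w i‖) ^ 2 := by
        gcongr
        simpa only [dotProduct, norm_mul] using norm_sum_le Finset.univ fun i => u i * w i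
    _ ≤ _ := Finset.sum_mul_sq_le_sq_mul_sq _ _ _

theorem star_dotProduct_self_eq_sum_norm_sq {ι 𝕜 : Type*} [Fintype ι] [RCLike 𝕜] (u : ι → 𝕜) :
    star u ⬝ᵥ u = ((∑ i, ‖u i‖ ^ 2 : ℝ) : 𝕜) := by
  simp [dotProduct, RCLike.conj_mul]

theorem dotProduct_star_self_eq_sum_norm_sq {ι 𝕜 : Type*} [Fintype ι] [RCLike 𝕜] (u : ι → 𝕜) :
    u ⬝ᵥ star u = ((∑ i, ‖u i‖ ^ 2 : ℝ) : 𝕜) := by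
  rw [dotProduct_comm, star_dotProduct_self_eq_sum_norm_sq]

theorem two_mul_le_add_of_sq_le_mul {a b p q r s : ℝ} (hp : 0 ≤ p) (hq : 0 ≤ q) (hr : 0 ≤ r)
    (hs : 0 ≤ s) (ha : a ^ 2 ≤ p * q) (hb : b ^ 2 ≤ r * s) : 2 * a * b ≤ p * r + q * s := by
  refine (le_abs_self _).trans (abs_le_of_sq_le_sq ?_ (by positivity))
  nlinarith [sq_nonneg (p * r - q * s), mul_le_mul ha hb (sq_nonneg b) (by positivity)]

theorem nonneg_of_two_mul_norm_mul_norm_le (α β c c' : ℂ) {r : ℝ} (hc : ‖c'‖ = ‖c‖)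
    (hr : 2 * ‖α‖ * ‖β‖ ≤ r) :
    0 ≤ α * conj α + conj β * β + (α * c + conj (α * c)) + (β * c' + conj (β * c'))
      + c * conj c + r := by
  have hαc : -(‖α‖ * ‖c‖) ≤ (α * c).re := by
    simpa [norm_mul] using neg_le_of_abs_le (Complex.abs_re_le_norm (α * c))
  have hβc : -(‖β‖ * ‖c‖) ≤ (β * c').re := by
    simpa [norm_mul, hc] using neg_le_of_abs_le (Complex.abs_re_le_norm (β * c'))
  rw [Complex.mul_conj', Complex.conj_mul', Complex.mul_conj', Complex.add_conj, Complex.add_conj]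
  norm_cast
  nlinarith [sq_nonneg (‖c‖ - ‖α‖ - ‖β‖)]

section phiMO

variable {k₁ k₂ : ℕ}

theorem phiMO_add (X Y : Matrix (TI k₁ k₂) (TI k₁ k₂) ℂ) :
    phiMO k₁ k₂ (X + Y) = phiMO k₁ k₂ X + phiMO k₁ k₂ Y := by
  ext (a | b | _) (a' | b' | _) <;> simp [phiMO, Finset.sum_add_distrib] <;> split_ifs <;> ring

theorem isHermitian_phiMO {X : Matrix (TI k₁ k₂) (TI k₁ k₂) ℂ} (hX : X.IsHermitian) :
    (phiMO k₁ k₂ X).IsHermitian := by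
  ext (a | b | _) (a' | b' | _) <;>
    simp [phiMO, tidx, hX.apply, apply_ite (star : ℂ → ℂ), eq_comm]

theorem star_dotProduct_phiMO_rankOne_mulVec (ξ v : TI k₁ k₂ → ℂ) :
    star v ⬝ᵥ phiMO k₁ k₂ (rankOne ξ) *ᵥ v =
      let α := star (v ∘ Sum.inl) ⬝ᵥ ξ ∘ Sum.inl
      let β := ξ ∘ Sum.inr ∘ Sum.inl ⬝ᵥ v ∘ Sum.inr ∘ Sum.inl
      let c := conj (ξ tidx) * v tidx
      let c' := conj (ξ tidx * v tidx)
      α * conj α + conj β * β + (α * c + conj (α * c)) + (β * c' + conj (β * c')) + c * conj c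
        + (star (v ∘ Sum.inl) ⬝ᵥ v ∘ Sum.inl)
          * (ξ ∘ Sum.inr ∘ Sum.inl ⬝ᵥ star (ξ ∘ Sum.inr ∘ Sum.inl))
        + (star (v ∘ Sum.inr ∘ Sum.inl) ⬝ᵥ v ∘ Sum.inr ∘ Sum.inl)
          * (ξ ∘ Sum.inl ⬝ᵥ star (ξ ∘ Sum.inl)) := by
  simp only [dotProduct, mulVec, Fintype.sum_sum_type, phiMO, rankOne, vecMulVec_apply, of_apply,
    Function.comp_apply, tidx, Pi.star_apply, RCLike.star_def, Finset.univ_unique,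
    Finset.sum_singleton, map_sum, map_mul, Complex.conj_conj, PUnit.default_eq_unit,
    Finset.sum_mul_sum]
  simp only [mul_add, add_mul, Finset.mul_sum, Finset.sum_mul, ite_mul, zero_mul,
    Finset.sum_add_distrib, Finset.sum_ite_eq, Finset.mem_univ, if_true, Finset.sum_const_zero,
    zero_add]
  simp only [mul_comm, mul_left_comm, mul_assoc]
  ring

theorem posSemidef_phiMO_rankOne (ξ : TI k₁ k₂ → ℂ) : (phiMO k₁ k₂ (rankOne ξ)).PosSemidef := by
  refine .of_dotProduct_mulVec_nonneg
    (isHermitian_phiMO (posSemidef_vecMulVec_self_star ξ).isHermitian) fun v => ?_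
  rw [star_dotProduct_phiMO_rankOne_mulVec, star_dotProduct_self_eq_sum_norm_sq,
    star_dotProduct_self_eq_sum_norm_sq, dotProduct_star_self_eq_sum_norm_sq,
    dotProduct_star_self_eq_sum_norm_sq, RCLike.ofReal_eq_complex_ofReal]
  set α := star (v ∘ Sum.inl) ⬝ᵥ ξ ∘ Sum.inl
  set β := ξ ∘ Sum.inr ∘ Sum.inl ⬝ᵥ v ∘ Sum.inr ∘ Sum.inl
  have hα : ‖α‖ ^ 2 ≤ (∑ i, ‖v (Sum.inl i)‖ ^ 2) * ∑ i, ‖ξ (Sum.inl i)‖ ^ 2 := by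
    simpa using norm_dotProduct_sq_le (star (v ∘ Sum.inl)) (ξ ∘ Sum.inl)
  have hβ : ‖β‖ ^ 2 ≤
      (∑ i, ‖ξ (Sum.inr (Sum.inl i))‖ ^ 2) * ∑ i, ‖v (Sum.inr (Sum.inl i))‖ ^ 2 :=
    norm_dotProduct_sq_le _ _
  have key := nonneg_of_two_mul_norm_mul_norm_le α β (conj (ξ tidx) * v tidx)
    (conj (ξ tidx * v tidx)) (by simp)
    (two_mul_le_add_of_sq_le_mul (by positivity) (by positivity) (by positivity)
      (by positivity) hα hβ)
  convert key using 1
  push_cast [Function.comp_apply]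
  ring

end phiMO

/-- The map `φ_{K₁,K₂}` is positive. -/
theorem statement3 (k₁ k₂ : ℕ) : IsPosMap (phiMO k₁ k₂) := by
  intro X hX
  obtain ⟨m, ξ, rfl⟩ := Matrix.posSemidef_iff_eq_sum_vecMulVec.mp hX
  change (phiMO k₁ k₂ (∑ i, rankOne (ξ i))).PosSemidef
  rw [← AddMonoidHom.mk'_apply (phiMO k₁ k₂) phiMO_add, map_sum]
  exact posSemidef_sum _ fun i _ => posSemidef_phiMO_rankOne (ξ i)

end Paper
end
end

section
/- For any finite-dimensional complex Hilbert spaces K₁, K₂, the map Ω_{K₁,K₂} : B(K₁ ⊕ K₂ ⊕ ℂ) → B(K₁ ⊕ K₂ ⊕ ℂ) defined blockwise by Ω(X)₁₁ = (Tr X₁₁ + Tr X₂₂)·1, Ω(X)₂₂ = X₂₂ᵀ + Tr(X₁₁)·1, Ω(X)₁₃ = X₁₃, Ω(X)₂₃ = X₃₂ᵀ, Ω(X)₃₁ = X₃₁, Ω(X)₃₂ = X₂₃ᵀ, Ω(X)₃₃ = X₃₃, Ω(X)₁₂ = Ω(X)₂₁ = 0, is a positive map. -/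
open scoped ComplexOrder
open Matrix

noncomputable section
namespace Paper

lemma psd_re_nonneg {n : Type*} [Fintype n] {M : Matrix n n ℂ} (hM : M.PosSemidef)
    (f : n → ℂ) : 0 ≤ (star f ⬝ᵥ M.mulVec f).re := by
  have h := hM.dotProduct_mulVec_nonneg f; rw [Complex.le_def] at h; exact h.1

lemma psd_im_zero {n : Type*} [Fintype n] {M : Matrix n n ℂ} (hM : M.PosSemidef)
    (f : n → ℂ) : (star f ⬝ᵥ M.mulVec f).im = 0 := by
  have h := hM.dotProduct_mulVec_nonneg f; rw [Complex.le_def] at h; exact h.2.symm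

lemma conj_form {n : Type*} [Fintype n] {M : Matrix n n ℂ} (hM : M.IsHermitian)
    (f g : n → ℂ) :
    starRingEnd ℂ (star f ⬝ᵥ M.mulVec g) = star g ⬝ᵥ M.mulVec f := by
  show star (star f ⬝ᵥ M *ᵥ g) = star g ⬝ᵥ M *ᵥ f
  rw [star_dotProduct, star_star, Matrix.star_mulVec, ← Matrix.dotProduct_mulVec, hM.eq]

/-- Cauchy–Schwarz for the sesquilinear form of a PSD matrix. -/
lemma psd_cs {n : Type*} [Fintype n] {M : Matrix n n ℂ} (hM : M.PosSemidef)
    (f g : n → ℂ) :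
    Complex.normSq (star f ⬝ᵥ M.mulVec g)
      ≤ (star f ⬝ᵥ M.mulVec f).re * (star g ⬝ᵥ M.mulVec g).re := by
  set w := star f ⬝ᵥ M.mulVec g with hw
  set A := (star f ⬝ᵥ M.mulVec f).re with hA'
  set C := (star g ⬝ᵥ M.mulVec g).re with hC'
  set W := Complex.normSq w with hW'
  have hA : 0 ≤ A := psd_re_nonneg hM f
  have hC : 0 ≤ C := psd_re_nonneg hM g
  have hW : 0 ≤ W := Complex.normSq_nonneg w
  have key : ∀ r : ℝ, 0 ≤ A - 2 * r * W + r ^ 2 * W * C := by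
    intro r
    have h := psd_re_nonneg hM (f + ((-(r:ℂ)) * (starRingEnd ℂ w)) • g)
    set t : ℂ := (-(r:ℂ)) * (starRingEnd ℂ w) with ht
    have hconj : star g ⬝ᵥ M.mulVec f = starRingEnd ℂ w := by
      rw [← conj_form hM.1 f g]
    have expand : star (f + t • g) ⬝ᵥ M.mulVec (f + t • g)
        = (star f ⬝ᵥ M.mulVec f) + t * w + starRingEnd ℂ t * starRingEnd ℂ w
          + starRingEnd ℂ t * t * (star g ⬝ᵥ M.mulVec g) := by
      simp only [star_add, star_smul, Matrix.mulVec_add, Matrix.mulVec_smul,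
        dotProduct_add, add_dotProduct, dotProduct_smul, smul_dotProduct,
        smul_eq_mul, star_trivial, RCLike.star_def]
      rw [hconj, ← hw]
      ring
    rw [expand] at h
    have hww : (starRingEnd ℂ w) * w = ((W : ℝ) : ℂ) := by
      rw [mul_comm, hW', Complex.mul_conj]
    have e1 : t * w = ((-(r * W) : ℝ) : ℂ) := by
      rw [ht, mul_assoc, hww]; push_cast; ring
    have e2 : starRingEnd ℂ t * starRingEnd ℂ w = ((-(r * W) : ℝ) : ℂ) := by
      rw [← _root_.map_mul, e1, Complex.conj_ofReal]
    have e3 : starRingEnd ℂ t * t = ((r ^ 2 * W : ℝ) : ℂ) := by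
      rw [ht]
      simp only [_root_.map_mul, map_neg, Complex.conj_conj, map_ofNat, Complex.conj_ofReal]
      rw [show -(r:ℂ) * w * (-(r:ℂ) * starRingEnd ℂ w) = ((r:ℂ) * (r:ℂ)) * (starRingEnd ℂ w * w) by ring, hww]
      push_cast; ring
    rw [e1, e2, e3] at h
    have him : (star g ⬝ᵥ M.mulVec g).im = 0 := psd_im_zero hM g
    simp only [Complex.add_re, Complex.ofReal_re, Complex.mul_re,
      Complex.ofReal_im, him, ← hA', ← hC'] at h
    nlinarith [h]
  rcases eq_or_lt_of_le hC with hC0 | hC0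
  · -- C = 0
    by_cases hW0 : W = 0
    · rw [hW0]; positivity
    · exfalso
      have hWpos : 0 < W := lt_of_le_of_ne hW (Ne.symm hW0)
      have := key ((A + 1) / (2 * W))
      rw [← hC0] at this
      have h2 : A - 2 * ((A + 1) / (2 * W)) * W = -1 := by
        field_simp
        ring
      nlinarith [this]
  · have := key (1 / C)
    have h2 : A - 2 * (1 / C) * W + (1 / C) ^ 2 * W * C = A - W / C := by
      field_simp; ring
    rw [h2] at this
    have : W / C ≤ A := by linarith
    calc W = (W / C) * C := by field_simp
    _ ≤ A * C := by apply mul_le_mul_of_nonneg_right this (le_of_lt hC0)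


lemma psd_single_form {n : Type*} [Fintype n] [DecidableEq n] (M : Matrix n n ℂ) (i j : n) :
    star (Pi.single i 1) ⬝ᵥ M.mulVec (Pi.single j 1) = M i j := by
  have hs : star (Pi.single i (1:ℂ)) = (Pi.single i 1 : n → ℂ) := by
    funext k
    simp only [Pi.star_apply, Pi.single_apply]
    by_cases h : k = i <;> simp [h]
  rw [hs, Matrix.mulVec_single, single_dotProduct]
  simp

lemma psd_diag_nonneg {n : Type*} [Fintype n] [DecidableEq n] {M : Matrix n n ℂ}
    (hM : M.PosSemidef) (i : n) : 0 ≤ (M i i).re := by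
  have := psd_re_nonneg hM (Pi.single i 1)
  rwa [psd_single_form] at this

lemma psd_entry_abs {n : Type*} [Fintype n] [DecidableEq n] {M : Matrix n n ℂ}
    (hM : M.PosSemidef) (i j : n) :
    ‖M i j‖ ≤ Real.sqrt ((M i i).re) * Real.sqrt ((M j j).re) := by
  have h := psd_cs hM (Pi.single i 1) (Pi.single j 1)
  rw [psd_single_form, psd_single_form, psd_single_form] at h
  rw [Complex.norm_def, ← Real.sqrt_mul (psd_diag_nonneg hM i)]
  exact Real.sqrt_le_sqrt h

lemma form_le_sum_sqrt {n : Type*} [Fintype n] [DecidableEq n] {M : Matrix n n ℂ}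
    (hM : M.PosSemidef) (f : n → ℂ) :
    (star f ⬝ᵥ M.mulVec f).re
      ≤ (∑ i, Real.sqrt ((M i i).re) * ‖f i‖) ^ 2 := by
  have expand : star f ⬝ᵥ M.mulVec f = ∑ i, ∑ j, starRingEnd ℂ (f i) * M i j * f j := by
    simp only [dotProduct, Matrix.mulVec, Pi.star_apply, RCLike.star_def, Finset.mul_sum]
    congr 1; funext i; congr 1; funext j; ring
  calc (star f ⬝ᵥ M.mulVec f).re = ∑ i, ∑ j, (starRingEnd ℂ (f i) * M i j * f j).re := by
        rw [expand, Complex.re_sum]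
        exact Finset.sum_congr rfl fun i _ => Complex.re_sum _ _
    _ ≤ ∑ i, ∑ j, (Real.sqrt ((M i i).re) * ‖f i‖)
          * (Real.sqrt ((M j j).re) * ‖f j‖) := by
        refine Finset.sum_le_sum fun i _ => Finset.sum_le_sum fun j _ => ?_
        have h1 := Complex.re_le_norm (starRingEnd ℂ (f i) * M i j * f j)
        rw [norm_mul, norm_mul, Complex.norm_conj] at h1
        have h2 := psd_entry_abs hM i j
        have h3 : ‖f i‖ * ‖M i j‖ * ‖f j‖
            ≤ ‖f i‖ * (Real.sqrt ((M i i).re) * Real.sqrt ((M j j).re)) * ‖f j‖ := by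
          exact mul_le_mul_of_nonneg_right
            (mul_le_mul_of_nonneg_left h2 (norm_nonneg (f i)))
            (norm_nonneg (f j))
        calc (starRingEnd ℂ (f i) * M i j * f j).re
            ≤ ‖f i‖ * ‖M i j‖ * ‖f j‖ := h1
          _ ≤ _ := by linarith [h3]
    _ = (∑ i, Real.sqrt ((M i i).re) * ‖f i‖) ^ 2 := by
        rw [sq, Finset.sum_mul_sum]


lemma form_expand2 {k₁ k₂ : ℕ} (M : Matrix (TI k₁ k₂) (TI k₁ k₂) ℂ) (x y : TI k₁ k₂ → ℂ) :
    star x ⬝ᵥ M.mulVec y =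
      ((∑ a, ∑ b, starRingEnd ℂ (x (Sum.inl a)) * (M (Sum.inl a) (Sum.inl b) * y (Sum.inl b)))
        + ((∑ a, ∑ b, starRingEnd ℂ (x (Sum.inl a)) * (M (Sum.inl a) (Sum.inr (Sum.inl b)) * y (Sum.inr (Sum.inl b))))
          + (∑ a, starRingEnd ℂ (x (Sum.inl a)) * (M (Sum.inl a) tidx * y tidx))))
      + (((∑ a, ∑ b, starRingEnd ℂ (x (Sum.inr (Sum.inl a))) * (M (Sum.inr (Sum.inl a)) (Sum.inl b) * y (Sum.inl b)))
          + ((∑ a, ∑ b, starRingEnd ℂ (x (Sum.inr (Sum.inl a))) * (M (Sum.inr (Sum.inl a)) (Sum.inr (Sum.inl b)) * y (Sum.inr (Sum.inl b))))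
            + (∑ a, starRingEnd ℂ (x (Sum.inr (Sum.inl a))) * (M (Sum.inr (Sum.inl a)) tidx * y tidx))))
        + (((∑ b, starRingEnd ℂ (x tidx) * (M tidx (Sum.inl b) * y (Sum.inl b)))
            + ((∑ b, starRingEnd ℂ (x tidx) * (M tidx (Sum.inr (Sum.inl b)) * y (Sum.inr (Sum.inl b))))
              + starRingEnd ℂ (x tidx) * (M tidx tidx * y tidx))))) := by
  simp only [dotProduct, Matrix.mulVec, Pi.star_apply, RCLike.star_def,
    Fintype.sum_sum_type, Fintype.sum_unique, mul_add, Finset.mul_sum, Finset.sum_add_distrib,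
    tidx, show (default : Unit) = () from rfl]
  abel

set_option maxHeartbeats 2000000

/-- The map `Ω_{K₁,K₂}` is positive. -/
theorem statement4 (k₁ k₂ : ℕ) : IsPosMap (OmegaMap k₁ k₂) := by
  intro X hX
  have hH : ∀ p q, starRingEnd ℂ (X p q) = X q p := fun p q => by
    have := congrFun (congrFun hX.1 q) p
    rw [Matrix.conjTranspose_apply] at this
    exact this
  refine Matrix.PosSemidef.of_dotProduct_mulVec_nonneg ?_ ?_
  · show (OmegaMap k₁ k₂ X).IsHermitian
    rw [Matrix.IsHermitian]
    ext p q
    rw [Matrix.conjTranspose_apply]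
    rcases p with a | b | _ <;> rcases q with a' | b' | _ <;>
      simp [OmegaMap, tidx, apply_ite, star_add, star_sum, hH] <;>
      split_ifs with h₁ h₂ <;>
        first
          | rfl
          | (intro h; exact absurd h₁ (fun hh => h hh.symm))
          | (intro h; exact absurd h.symm h₁)
          | simp_all
  · intro y
    classical
    set c : ℂ := y tidx with hc
    set q : ℂ := if c = 0 then 1 else c / starRingEnd ℂ c with hqdef
    have hcne : c ≠ 0 → starRingEnd ℂ c ≠ 0 := fun h => by simpa using h
    have hq2 : q * starRingEnd ℂ c = c := by
      by_cases h : c = 0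
      · simp [hqdef, h]
      · rw [hqdef, if_neg h]; exact div_mul_cancel₀ c (hcne h)
    have hq3 : starRingEnd ℂ q * c = starRingEnd ℂ c := by
      have := congrArg (starRingEnd ℂ) hq2
      simpa using this
    have hq1 : starRingEnd ℂ q * q = 1 := by
      by_cases h : c = 0
      · simp [hqdef, h]
      · rw [hqdef, if_neg h]
        rw [map_div₀]
        simp only [Complex.conj_conj]
        field_simp [h, hcne h]
    have habsq : ‖q‖ = 1 := by
      by_cases h : c = 0
      · simp [hqdef, h]
      · rw [hqdef, if_neg h, norm_div, Complex.norm_conj]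
        field_simp [norm_ne_zero_iff.mpr h]
    -- the comparison vector
    set z : TI k₁ k₂ → ℂ := Sum.elim (fun a => y (Sum.inl a))
      (Sum.elim (fun b => q * starRingEnd ℂ (y (Sum.inr (Sum.inl b)))) (fun _ => c)) with hz
    have master : star y ⬝ᵥ (OmegaMap k₁ k₂ X).mulVec y
        = star z ⬝ᵥ X.mulVec z
          + ((∑ i, X (Sum.inl i) (Sum.inl i)) + ∑ i, X (Sum.inr (Sum.inl i)) (Sum.inr (Sum.inl i)))
              * (∑ a, starRingEnd ℂ (y (Sum.inl a)) * y (Sum.inl a))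
          + (∑ i, X (Sum.inl i) (Sum.inl i))
              * (∑ a, starRingEnd ℂ (y (Sum.inr (Sum.inl a))) * y (Sum.inr (Sum.inl a)))
          - (∑ a, ∑ b, starRingEnd ℂ (y (Sum.inl a)) * (X (Sum.inl a) (Sum.inl b) * y (Sum.inl b)))
          - q * (∑ a, ∑ b, starRingEnd ℂ (y (Sum.inl a)) *
              (X (Sum.inl a) (Sum.inr (Sum.inl b)) * starRingEnd ℂ (y (Sum.inr (Sum.inl b)))))
          - starRingEnd ℂ q * (∑ a, ∑ b, y (Sum.inr (Sum.inl a)) *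
              (X (Sum.inr (Sum.inl a)) (Sum.inl b) * y (Sum.inl b))) := by
      have hcc : y (Sum.inr (Sum.inr ())) = c := rfl
      rw [form_expand2 (OmegaMap k₁ k₂ X) y y, form_expand2 X z z]
      simp only [hz, OmegaMap, Matrix.of_apply, tidx, Sum.elim_inl, Sum.elim_inr,
        _root_.map_mul, Complex.conj_conj, ite_mul, mul_ite, zero_mul, mul_zero,
        Finset.sum_ite_eq, Finset.mem_univ, if_true, mul_add, add_mul,
        Finset.sum_add_distrib, Finset.mul_sum, Finset.sum_const_zero, add_zero, zero_add, hcc]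
      have B1 : ∀ (S : ℂ), (∑ x, starRingEnd ℂ (y (Sum.inl x)) * (S * y (Sum.inl x)))
          = S * ∑ x, starRingEnd ℂ (y (Sum.inl x)) * y (Sum.inl x) := fun S => by
        rw [Finset.mul_sum]; exact Finset.sum_congr rfl fun _ _ => by ring
      have B3 : ∀ (S : ℂ), (∑ x, starRingEnd ℂ (y (Sum.inr (Sum.inl x))) * (S * y (Sum.inr (Sum.inl x))))
          = S * ∑ x, starRingEnd ℂ (y (Sum.inr (Sum.inl x))) * y (Sum.inr (Sum.inl x)) := fun S => by
        rw [Finset.mul_sum]; exact Finset.sum_congr rfl fun _ _ => by ring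
      have B4 : ∀ (S : ℂ), (∑ x, S * (starRingEnd ℂ (y (Sum.inl x)) * y (Sum.inl x)))
          = S * ∑ x, starRingEnd ℂ (y (Sum.inl x)) * y (Sum.inl x) := fun S => by
        rw [Finset.mul_sum]
      have B6 : ∀ (S : ℂ), (∑ x, S * (starRingEnd ℂ (y (Sum.inr (Sum.inl x))) * y (Sum.inr (Sum.inl x))))
          = S * ∑ x, starRingEnd ℂ (y (Sum.inr (Sum.inl x))) * y (Sum.inr (Sum.inl x)) := fun S => by
        rw [Finset.mul_sum]
      have B7 : (∑ x, ∑ x₁, starRingEnd ℂ (y (Sum.inl x)) *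
            (X (Sum.inl x) (Sum.inr (Sum.inl x₁)) * (q * starRingEnd ℂ (y (Sum.inr (Sum.inl x₁))))))
          = q * ∑ x, ∑ x₁, starRingEnd ℂ (y (Sum.inl x)) *
            (X (Sum.inl x) (Sum.inr (Sum.inl x₁)) * starRingEnd ℂ (y (Sum.inr (Sum.inl x₁)))) := by
        rw [Finset.mul_sum]
        exact Finset.sum_congr rfl fun _ _ => by
          rw [Finset.mul_sum]; exact Finset.sum_congr rfl fun _ _ => by ring
      have B8 : (∑ x, ∑ i, q * (starRingEnd ℂ (y (Sum.inl x)) *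
            (X (Sum.inl x) (Sum.inr (Sum.inl i)) * starRingEnd ℂ (y (Sum.inr (Sum.inl i))))))
          = q * ∑ x, ∑ i, starRingEnd ℂ (y (Sum.inl x)) *
            (X (Sum.inl x) (Sum.inr (Sum.inl i)) * starRingEnd ℂ (y (Sum.inr (Sum.inl i)))) := by
        rw [Finset.mul_sum]
        exact Finset.sum_congr rfl fun _ _ => by rw [Finset.mul_sum]
      have B9 : (∑ x, ∑ x₁, starRingEnd ℂ q * y (Sum.inr (Sum.inl x)) *
            (X (Sum.inr (Sum.inl x)) (Sum.inl x₁) * y (Sum.inl x₁)))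
          = starRingEnd ℂ q * ∑ x, ∑ x₁, y (Sum.inr (Sum.inl x)) *
            (X (Sum.inr (Sum.inl x)) (Sum.inl x₁) * y (Sum.inl x₁)) := by
        rw [Finset.mul_sum]
        exact Finset.sum_congr rfl fun _ _ => by
          rw [Finset.mul_sum]; exact Finset.sum_congr rfl fun _ _ => by ring
      have B10 : (∑ x, ∑ i, starRingEnd ℂ q * (y (Sum.inr (Sum.inl x)) *
            (X (Sum.inr (Sum.inl x)) (Sum.inl i) * y (Sum.inl i))))
          = starRingEnd ℂ q * ∑ x, ∑ i, y (Sum.inr (Sum.inl x)) *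
            (X (Sum.inr (Sum.inl x)) (Sum.inl i) * y (Sum.inl i)) := by
        rw [Finset.mul_sum]
        exact Finset.sum_congr rfl fun _ _ => by rw [Finset.mul_sum]
      have B11 : (∑ x, ∑ x₁, starRingEnd ℂ q * y (Sum.inr (Sum.inl x)) *
            (X (Sum.inr (Sum.inl x)) (Sum.inr (Sum.inl x₁)) * (q * starRingEnd ℂ (y (Sum.inr (Sum.inl x₁))))))
          = ∑ x, ∑ x₁, starRingEnd ℂ (y (Sum.inr (Sum.inl x))) *
            (X (Sum.inr (Sum.inl x₁)) (Sum.inr (Sum.inl x)) * y (Sum.inr (Sum.inl x₁))) := by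
        rw [Finset.sum_comm]
        exact Finset.sum_congr rfl fun a _ => Finset.sum_congr rfl fun b _ => by
          linear_combination (y (Sum.inr (Sum.inl b)) *
            (X (Sum.inr (Sum.inl b)) (Sum.inr (Sum.inl a)) * starRingEnd ℂ (y (Sum.inr (Sum.inl a))))) * hq1
      have B12 : (∑ x, starRingEnd ℂ q * y (Sum.inr (Sum.inl x)) *
            (X (Sum.inr (Sum.inl x)) (Sum.inr (Sum.inr ())) * c))
          = ∑ x, starRingEnd ℂ c * (X (Sum.inr (Sum.inl x)) (Sum.inr (Sum.inr ())) * y (Sum.inr (Sum.inl x))) := by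
        exact Finset.sum_congr rfl fun x _ => by
          linear_combination (y (Sum.inr (Sum.inl x)) * X (Sum.inr (Sum.inl x)) (Sum.inr (Sum.inr ()))) * hq3
      have B13 : (∑ x, starRingEnd ℂ c *
            (X (Sum.inr (Sum.inr ())) (Sum.inr (Sum.inl x)) * (q * starRingEnd ℂ (y (Sum.inr (Sum.inl x))))))
          = ∑ x, starRingEnd ℂ (y (Sum.inr (Sum.inl x))) * (X (Sum.inr (Sum.inr ())) (Sum.inr (Sum.inl x)) * c) := by
        exact Finset.sum_congr rfl fun x _ => by
          linear_combination (X (Sum.inr (Sum.inr ())) (Sum.inr (Sum.inl x)) *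
            starRingEnd ℂ (y (Sum.inr (Sum.inl x)))) * hq2
      rw [B1, B1, B3, B4, B4, B6, B7, B8, B9, B10, B11, B12, B13]
      ring
    -- auxiliary vectors
    set u' : TI k₁ k₂ → ℂ := Sum.elim (fun a => y (Sum.inl a)) (fun _ => 0) with hu'
    set v' : TI k₁ k₂ → ℂ := Sum.elim (fun _ => (0:ℂ))
      (Sum.elim (fun b => starRingEnd ℂ (y (Sum.inr (Sum.inl b)))) (fun _ => 0)) with hv'
    have hA : star u' ⬝ᵥ X.mulVec u'
        = ∑ a, ∑ b, starRingEnd ℂ (y (Sum.inl a)) * (X (Sum.inl a) (Sum.inl b) * y (Sum.inl b)) := by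
      rw [form_expand2]
      simp [hu', tidx]
    have hw : star u' ⬝ᵥ X.mulVec v'
        = ∑ a, ∑ b, starRingEnd ℂ (y (Sum.inl a)) *
            (X (Sum.inl a) (Sum.inr (Sum.inl b)) * starRingEnd ℂ (y (Sum.inr (Sum.inl b)))) := by
      rw [form_expand2]
      simp [hu', hv', tidx]
    have hw' : star v' ⬝ᵥ X.mulVec u'
        = ∑ a, ∑ b, y (Sum.inr (Sum.inl a)) * (X (Sum.inr (Sum.inl a)) (Sum.inl b) * y (Sum.inl b)) := by
      rw [form_expand2]
      simp [hu', hv', tidx]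
    have hwconj : (∑ a, ∑ b, y (Sum.inr (Sum.inl a)) * (X (Sum.inr (Sum.inl a)) (Sum.inl b) * y (Sum.inl b)))
        = starRingEnd ℂ (star u' ⬝ᵥ X.mulVec v') := by
      rw [conj_form hX.1 u' v', hw']
    -- real quantities
    set S₁r : ℝ := ∑ i, (X (Sum.inl i) (Sum.inl i)).re with hS₁r
    set S₂r : ℝ := ∑ i, (X (Sum.inr (Sum.inl i)) (Sum.inr (Sum.inl i))).re with hS₂r
    set U : ℝ := ∑ a, Complex.normSq (y (Sum.inl a)) with hU
    set V : ℝ := ∑ a, Complex.normSq (y (Sum.inr (Sum.inl a))) with hV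
    set Ar : ℝ := (star u' ⬝ᵥ X.mulVec u').re with hAr
    set Br : ℝ := (star v' ⬝ᵥ X.mulVec v').re with hBr
    set wc : ℂ := star u' ⬝ᵥ X.mulVec v' with hwc
    have hreal : ∀ p, X p p = (((X p p).re : ℝ) : ℂ) := fun p => by
      have h := hH p p
      have him : (X p p).im = 0 := by
        have := congrArg Complex.im h
        simp at this
        linarith
      exact Complex.ext (by simp) (by simp [him])
    have hS1 : (∑ i, X (Sum.inl i) (Sum.inl i)) = ((S₁r : ℝ) : ℂ) := by
      rw [hS₁r]; push_cast
      exact Finset.sum_congr rfl fun i _ => hreal _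
    have hS2 : (∑ i, X (Sum.inr (Sum.inl i)) (Sum.inr (Sum.inl i))) = ((S₂r : ℝ) : ℂ) := by
      rw [hS₂r]; push_cast
      exact Finset.sum_congr rfl fun i _ => hreal _
    have hUc : (∑ a, starRingEnd ℂ (y (Sum.inl a)) * y (Sum.inl a)) = ((U : ℝ) : ℂ) := by
      rw [hU]; push_cast
      exact Finset.sum_congr rfl fun a _ => by
        rw [Complex.normSq_eq_conj_mul_self]
    have hVc : (∑ a, starRingEnd ℂ (y (Sum.inr (Sum.inl a))) * y (Sum.inr (Sum.inl a))) = ((V : ℝ) : ℂ) := by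
      rw [hV]; push_cast
      exact Finset.sum_congr rfl fun a _ => by
        rw [Complex.normSq_eq_conj_mul_self]
    have hAc : (∑ a, ∑ b, starRingEnd ℂ (y (Sum.inl a)) * (X (Sum.inl a) (Sum.inl b) * y (Sum.inl b)))
        = ((Ar : ℝ) : ℂ) := by
      rw [← hA, hAr]
      exact Complex.ext (by simp) (by simp [psd_im_zero hX u'])
    have hQfinal : star y ⬝ᵥ (OmegaMap k₁ k₂ X).mulVec y
        = star z ⬝ᵥ X.mulVec z
          + ((((S₁r + S₂r) * U + S₁r * V - Ar - 2 * (q * wc).re) : ℝ) : ℂ) := by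
      rw [master, hS1, hS2, hUc, hVc, hAc, hwconj, ← hw]
      rw [show starRingEnd ℂ q * starRingEnd ℂ wc = starRingEnd ℂ (q * wc) from (_root_.map_mul _ _ _).symm]
      apply Complex.ext <;>
        simp only [Complex.add_re, Complex.sub_re, Complex.add_im, Complex.sub_im,
          Complex.ofReal_re, Complex.ofReal_im, Complex.mul_re, Complex.mul_im,
          Complex.conj_re, Complex.conj_im] <;> ring
    -- bounds
    have hAr0 : 0 ≤ Ar := psd_re_nonneg hX u'
    have hBr0 : 0 ≤ Br := psd_re_nonneg hX v'
    have hU0 : 0 ≤ U := Finset.sum_nonneg fun a _ => Complex.normSq_nonneg _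
    have hV0 : 0 ≤ V := Finset.sum_nonneg fun a _ => Complex.normSq_nonneg _
    have hS1r0 : 0 ≤ S₁r := Finset.sum_nonneg fun i _ => psd_diag_nonneg hX _
    have hS2r0 : 0 ≤ S₂r := Finset.sum_nonneg fun i _ => psd_diag_nonneg hX _
    have hCS : Complex.normSq wc ≤ Ar * Br := psd_cs hX u' v'
    have hqwre : (q * wc).re ≤ ‖wc‖ := by
      calc (q * wc).re ≤ ‖q * wc‖ := Complex.re_le_norm _
        _ = ‖q‖ * ‖wc‖ := by rw [norm_mul]
        _ = ‖wc‖ := by rw [habsq, one_mul]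
    have hsqabs : (‖wc‖) ^ 2 = Complex.normSq wc := Complex.sq_norm _
    have habsnn : 0 ≤ ‖wc‖ := norm_nonneg _
    have htrA : Ar ≤ S₁r * U := by
      have h1 := form_le_sum_sqrt hX u'
      have h2 : (∑ p, Real.sqrt ((X p p).re) * ‖u' p‖)
          = ∑ a, Real.sqrt ((X (Sum.inl a) (Sum.inl a)).re) * ‖y (Sum.inl a)‖ := by
        rw [Fintype.sum_sum_type]
        simp [hu']
      rw [h2] at h1
      have h3 := Finset.sum_mul_sq_le_sq_mul_sq Finset.univ
        (fun a => Real.sqrt ((X (Sum.inl a) (Sum.inl a)).re)) (fun a => ‖y (Sum.inl a)‖)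
      have h4 : (∑ a, Real.sqrt ((X (Sum.inl a) (Sum.inl a)).re) ^ 2) = S₁r := by
        rw [hS₁r]
        exact Finset.sum_congr rfl fun a _ => Real.sq_sqrt (psd_diag_nonneg hX _)
      have h5 : (∑ a, ‖y (Sum.inl a)‖ ^ 2) = U := by
        rw [hU]
        exact Finset.sum_congr rfl fun a _ => Complex.sq_norm _
      rw [h4, h5] at h3
      calc Ar ≤ _ := h1
        _ ≤ S₁r * U := h3
    have htrB : Br ≤ S₂r * V := by
      have h1 := form_le_sum_sqrt hX v'
      have h2 : (∑ p, Real.sqrt ((X p p).re) * ‖v' p‖)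
          = ∑ a, Real.sqrt ((X (Sum.inr (Sum.inl a)) (Sum.inr (Sum.inl a))).re)
              * ‖y (Sum.inr (Sum.inl a))‖ := by
        rw [Fintype.sum_sum_type]
        simp [hv']
      rw [h2] at h1
      have h3 := Finset.sum_mul_sq_le_sq_mul_sq Finset.univ
        (fun a => Real.sqrt ((X (Sum.inr (Sum.inl a)) (Sum.inr (Sum.inl a))).re))
        (fun a => ‖y (Sum.inr (Sum.inl a))‖)
      have h4 : (∑ a, Real.sqrt ((X (Sum.inr (Sum.inl a)) (Sum.inr (Sum.inl a))).re) ^ 2) = S₂r := by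
        rw [hS₂r]
        exact Finset.sum_congr rfl fun a _ => Real.sq_sqrt (psd_diag_nonneg hX _)
      have h5 : (∑ a, ‖y (Sum.inr (Sum.inl a))‖ ^ 2) = V := by
        rw [hV]
        exact Finset.sum_congr rfl fun a _ => Complex.sq_norm _
      rw [h4, h5] at h3
      calc Br ≤ _ := h1
        _ ≤ S₂r * V := h3
    have hslack : 0 ≤ (S₁r + S₂r) * U + S₁r * V - Ar - 2 * (q * wc).re := by
      have hAB : Ar * Br ≤ (S₁r * U) * (S₂r * V) :=
        mul_le_mul htrA htrB hBr0 (mul_nonneg hS1r0 hU0)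
      have hx : 0 ≤ S₂r * U := mul_nonneg hS2r0 hU0
      have ht : 0 ≤ S₁r * V := mul_nonneg hS1r0 hV0
      have h6 : ‖wc‖ ^ 2 ≤ (S₂r * U) * (S₁r * V) := by nlinarith [hCS, hsqabs, hAB]
      have h8 : ‖wc‖ ≤ Real.sqrt ((S₂r * U) * (S₁r * V)) := by
        rw [← Real.sqrt_sq habsnn]
        exact Real.sqrt_le_sqrt h6
      have h9 : Real.sqrt ((S₂r * U) * (S₁r * V)) ≤ (S₂r * U + S₁r * V) / 2 := by
        rw [show (S₂r * U + S₁r * V) / 2 = Real.sqrt (((S₂r * U + S₁r * V) / 2) ^ 2) from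
          (Real.sqrt_sq (by linarith)).symm]
        apply Real.sqrt_le_sqrt
        nlinarith [sq_nonneg (S₂r * U - S₁r * V)]
      linarith [hqwre, htrA, h8, h9]
    rw [hQfinal, Complex.le_def]
    constructor
    · simp only [Complex.add_re, Complex.ofReal_re, Complex.zero_re]
      have := psd_re_nonneg hX z
      linarith
    · simp [psd_im_zero hX z]

end Paper
end
end

section
/- Let φ be the merging of positive maps φ₁, φ₂ by means of B_i, C_i, ω_i, and assume φ is positive. If φ is 2-positive, then C₁ = 0 and C₂ = 0, and δ₁(η₁,y₁)δ₂(η₂,y₂) ≥ ε₁(η₁,y₁)ε₂(η₂,y₂) for all η_i ∈ K_i, y_i ∈ H_i (i = 1, 2). Analogously, if φ is 2-copositive, then B₁ = 0 and B₂ = 0 and the same inequality holds. -/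
/-!
If `Φ` is 2-positive, the block matrix `[[Φ(uu*), Φ(uv*)], [Φ(vu*), Φ(vv*)]]` is positive
semidefinite, which gives the Cauchy–Schwarz inequality
`|⟨x, Φ(uv*) z⟩|² ≤ ⟨x, Φ(uu*) x⟩ ⟨z, Φ(vv*) z⟩`.
For the merging, with `u` the unit vector of the summand `ℂ` and `x = y ⊕ 0 ⊕ 0`, the first
factor vanishes while the cross term with `v = η ⊕ 0 ⊕ 0`, `z = u` is `⟨y, C₁ η̄⟩`; hence `C₁ = 0`,
and likewise `C₂ = 0`. Then `u = η₁ ⊕ 0 ⊕ 1`, `v = 0 ⊕ η₂ ⊕ 1`, `x = y₁ ⊕ 0 ⊕ (-β̄₁)`,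
`z = 0 ⊕ y₂ ⊕ (-β̄₂)` with `βᵢ = ⟨yᵢ, Bᵢηᵢ⟩` make the three forms equal to `μ₁² - ε₁²`,
`μ₂² - ε₂²` and `-β₁β̄₂`, so that Cauchy–Schwarz reads `ε₁²ε₂² ≤ δ₁²δ₂²`.
The 2-copositive case is the 2-positive one after transposition: `X ↦ Φ(Xᵀ)` is the merging of
`φᵢ ∘ T, Cᵢ, Bᵢ, ωᵢ ∘ T`, and `η ↦ η̄` exchanges the roles of `Bᵢ` and `Cᵢ` in `εᵢ` and `δᵢ`.
-/

open scoped ComplexOrder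
open Matrix

noncomputable section
namespace Paper

theorem _root_.Matrix.PosSemidef.norm_dotProduct_mulVec_sq_le {n : Type*} [Fintype n]
    {W : Matrix n n ℂ} (hW : W.PosSemidef) (a b : n → ℂ) :
    ‖star a ⬝ᵥ W *ᵥ b‖ ^ 2 ≤ (star a ⬝ᵥ W *ᵥ a).re * (star b ⬝ᵥ W *ᵥ b).re := by
  let _ := W.toSeminormedAddCommGroup hW
  let _ := W.toInnerProductSpace hW
  have hinner : ∀ x y : n → ℂ, inner ℂ x y = star x ⬝ᵥ W *ᵥ y := fun x y => dotProduct_comm _ _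
  have hcs := inner_mul_inner_self_le (𝕜 := ℂ) a b
  rw [norm_inner_symm b a] at hcs
  simpa only [hinner, sq, RCLike.re_to_complex] using hcs

theorem _root_.Matrix.eq_zero_of_forall_star_dotProduct_mulVec_eq_zero {m n : Type*}
    [Fintype m] [Fintype n] {C : Matrix m n ℂ} (h : ∀ y v, star y ⬝ᵥ C *ᵥ v = 0) : C = 0 :=
  ext_iff_mulVec.mpr fun v => by simpa using dotProduct_star_self_eq_zero.mp (h (C *ᵥ v) v)

theorem vecMul_conjTranspose_dotProduct {m n : Type*} [Fintype m] [Fintype n] (B : Matrix m n ℂ)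
    (η : n → ℂ) (y : m → ℂ) : star η ᵥ* Bᴴ ⬝ᵥ y = star (star y ⬝ᵥ B *ᵥ η) := by
  rw [star_dotProduct, star_star, star_mulVec, dotProduct_comm]

section TwoPositive

variable {m n : Type*} [Fintype n] {φ : Matrix m m ℂ → Matrix n n ℂ}

theorem star_dotProduct_ampl2_vecMulVec_mulVec (u : Fin 2 → m → ℂ) (x z : Fin 2 → n → ℂ) :
    star (Function.uncurry x) ⬝ᵥ
        ampl2 φ (vecMulVec (Function.uncurry u) (star (Function.uncurry u))) *ᵥ
          Function.uncurry z =
      ∑ i, ∑ j, star (x i) ⬝ᵥ φ (vecMulVec (u i) (star (u j))) *ᵥ z j := by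
  simp only [dotProduct, mulVec, Fintype.sum_prod_type, Finset.mul_sum]
  refine Finset.sum_congr rfl fun i _ => ?_
  rw [Finset.sum_comm]
  rfl

variable [Fintype m]

theorem Is2Pos.norm_dotProduct_vecMulVec_sq_le (h : Is2Pos φ) (u v : m → ℂ) (x z : n → ℂ) :
    ‖star x ⬝ᵥ φ (vecMulVec u (star v)) *ᵥ z‖ ^ 2 ≤
      (star x ⬝ᵥ φ (rankOne u) *ᵥ x).re * (star z ⬝ᵥ φ (rankOne v) *ᵥ z).re := by
  have hM := h _ (posSemidef_vecMulVec_self_star (Function.uncurry ![u, v]))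
  have hcs := hM.norm_dotProduct_mulVec_sq_le (Function.uncurry ![x, 0]) (Function.uncurry ![0, z])
  simp_rw [star_dotProduct_ampl2_vecMulVec_mulVec] at hcs
  simpa [Fin.sum_univ_two, rankOne] using hcs

theorem Is2Pos.re_dotProduct_rankOne_nonneg (h : Is2Pos φ) (u : m → ℂ) (x : n → ℂ) :
    0 ≤ (star x ⬝ᵥ φ (rankOne u) *ᵥ x).re := by
  have hM := h _ (posSemidef_vecMulVec_self_star (Function.uncurry ![u, 0]))
  have hnn := hM.re_dotProduct_nonneg (Function.uncurry ![x, 0])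
  rw [star_dotProduct_ampl2_vecMulVec_mulVec] at hnn
  simpa [Fin.sum_univ_two, rankOne] using hnn

theorem Is2Pos.dotProduct_eq_zero_of_re_eq_zero (h : Is2Pos φ) {u : m → ℂ} {x : n → ℂ}
    (hux : (star x ⬝ᵥ φ (rankOne u) *ᵥ x).re = 0) (v : m → ℂ) (z : n → ℂ) :
    star x ⬝ᵥ φ (vecMulVec u (star v)) *ᵥ z = 0 := by
  simpa [hux] using h.norm_dotProduct_vecMulVec_sq_le u v x z

theorem Is2Copos.is2Pos_comp_transpose (h : Is2Copos φ) : Is2Pos fun X => φ Xᵀ :=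
  fun Y hY => h Yᵀ hY.transpose

end TwoPositive

section BlockVectors

variable {a b : ℕ}

def blockVec (v₁ : Fin a → ℂ) (v₂ : Fin b → ℂ) (c : ℂ) : TI a b → ℂ :=
  Sum.elim v₁ (Sum.elim v₂ fun _ => c)

@[simp]
theorem star_blockVec_dotProduct (x₁ w₁ : Fin a → ℂ) (x₂ w₂ : Fin b → ℂ) (xc wc : ℂ) :
    star (blockVec x₁ x₂ xc) ⬝ᵥ blockVec w₁ w₂ wc =
      star x₁ ⬝ᵥ w₁ + star x₂ ⬝ᵥ w₂ + star xc * wc := by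
  simp [blockVec, dotProduct, Fintype.sum_sum_type, add_assoc]

variable (u₁ v₁ : Fin a → ℂ) (u₂ v₂ : Fin b → ℂ) (uc vc : ℂ)

@[simp]
theorem blk11_vecMulVec_blockVec :
    blk11 (vecMulVec (blockVec u₁ u₂ uc) (star (blockVec v₁ v₂ vc))) = vecMulVec u₁ (star v₁) := by
  ext; simp [blk11, vecMulVec, blockVec]

@[simp]
theorem blk22_vecMulVec_blockVec :
    blk22 (vecMulVec (blockVec u₁ u₂ uc) (star (blockVec v₁ v₂ vc))) = vecMulVec u₂ (star v₂) := by
  ext; simp [blk22, vecMulVec, blockVec]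

@[simp]
theorem blk13_vecMulVec_blockVec :
    blk13 (vecMulVec (blockVec u₁ u₂ uc) (star (blockVec v₁ v₂ vc))) = star vc • u₁ := by
  ext; simp [blk13, vecMulVec, blockVec, tidx, mul_comm]

@[simp]
theorem blk31_vecMulVec_blockVec :
    blk31 (vecMulVec (blockVec u₁ u₂ uc) (star (blockVec v₁ v₂ vc))) = uc • star v₁ := by
  ext; simp [blk31, vecMulVec, blockVec, tidx]

@[simp]
theorem blk23_vecMulVec_blockVec :
    blk23 (vecMulVec (blockVec u₁ u₂ uc) (star (blockVec v₁ v₂ vc))) = star vc • u₂ := by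
  ext; simp [blk23, vecMulVec, blockVec, tidx, mul_comm]

@[simp]
theorem blk32_vecMulVec_blockVec :
    blk32 (vecMulVec (blockVec u₁ u₂ uc) (star (blockVec v₁ v₂ vc))) = uc • star v₂ := by
  ext; simp [blk32, vecMulVec, blockVec, tidx]

@[simp]
theorem vecMulVec_blockVec_tidx_tidx :
    vecMulVec (blockVec u₁ u₂ uc) (star (blockVec v₁ v₂ vc)) tidx tidx = uc * star vc := by
  simp [vecMulVec, blockVec, tidx]

end BlockVectors

theorem epsQ_star {k h : ℕ} (B C : Matrix (Fin h) (Fin k) ℂ) (η : Fin k → ℂ) (y : Fin h → ℂ) :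
    epsQ C B (star η) y = epsQ B C η y := by
  simp [epsQ, add_comm]

theorem deltaQ_comp_transpose_star {k h : ℕ}
    (φ : Matrix (Fin k) (Fin k) ℂ →ₗ[ℂ] Matrix (Fin h) (Fin h) ℂ) (B C : Matrix (Fin h) (Fin k) ℂ)
    (η : Fin k → ℂ) (y : Fin h → ℂ) :
    deltaQ (φ ∘ₗ (transposeLinearEquiv (Fin k) (Fin k) ℂ ℂ).toLinearMap) C B (star η) y =
      deltaQ φ B C η y := by
  simp [deltaQ, muQ, rankOne, transpose_vecMulVec, epsQ_star]

theorem deltaQ_eq_sqrt {k h : ℕ} {φ : Matrix (Fin k) (Fin k) ℂ →ₗ[ℂ] Matrix (Fin h) (Fin h) ℂ}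
    {B C : Matrix (Fin h) (Fin k) ℂ} {η : Fin k → ℂ} {y : Fin h → ℂ}
    (hle : epsQ B C η y ^ 2 ≤ (star y ⬝ᵥ φ (rankOne η) *ᵥ y).re) :
    deltaQ φ B C η y = √((star y ⬝ᵥ φ (rankOne η) *ᵥ y).re - epsQ B C η y ^ 2) := by
  rw [deltaQ, muQ, Real.sq_sqrt ((sq_nonneg _).trans hle)]

section Merging

variable {k₁ k₂ h₁ h₂ : ℕ}
    (φ₁ : Matrix (Fin k₁) (Fin k₁) ℂ →ₗ[ℂ] Matrix (Fin h₁) (Fin h₁) ℂ)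
    (φ₂ : Matrix (Fin k₂) (Fin k₂) ℂ →ₗ[ℂ] Matrix (Fin h₂) (Fin h₂) ℂ)
    (B₁ C₁ : Matrix (Fin h₁) (Fin k₁) ℂ) (B₂ C₂ : Matrix (Fin h₂) (Fin k₂) ℂ)
    (ω₁ : Matrix (Fin k₁) (Fin k₁) ℂ →ₗ[ℂ] ℂ) (ω₂ : Matrix (Fin k₂) (Fin k₂) ℂ →ₗ[ℂ] ℂ)
    (P₁ : Matrix (Fin h₁) (Fin h₁) ℂ) (P₂ : Matrix (Fin h₂) (Fin h₂) ℂ)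

theorem merging_mulVec_blockVec (X : Matrix (TI k₁ k₂) (TI k₁ k₂) ℂ) (z₁ : Fin h₁ → ℂ)
    (z₂ : Fin h₂ → ℂ) (zc : ℂ) :
    merging φ₁ φ₂ B₁ C₁ B₂ C₂ ω₁ ω₂ P₁ P₂ X *ᵥ blockVec z₁ z₂ zc = blockVec
      ((φ₁ (blk11 X) + ω₂ (blk22 X) • P₁) *ᵥ z₁ + zc • (B₁ *ᵥ blk13 X + C₁ *ᵥ blk31 X))
      ((φ₂ (blk22 X) + ω₁ (blk11 X) • P₂) *ᵥ z₂ + zc • (B₂ *ᵥ blk23 X + C₂ *ᵥ blk32 X))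
      ((blk31 X ᵥ* B₁ᴴ + blk13 X ᵥ* C₁ᴴ) ⬝ᵥ z₁ + (blk32 X ᵥ* B₂ᴴ + blk23 X ᵥ* C₂ᴴ) ⬝ᵥ z₂ +
        X tidx tidx * zc) := by
  ext (p | p | _) <;> simp [merging, blockVec, mulVec, dotProduct, Fintype.sum_sum_type, tidx] <;>
    ring

theorem merging_transpose (X : Matrix (TI k₁ k₂) (TI k₁ k₂) ℂ) :
    merging φ₁ φ₂ B₁ C₁ B₂ C₂ ω₁ ω₂ P₁ P₂ Xᵀ =
      merging (φ₁ ∘ₗ (transposeLinearEquiv (Fin k₁) (Fin k₁) ℂ ℂ).toLinearMap)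
        (φ₂ ∘ₗ (transposeLinearEquiv (Fin k₂) (Fin k₂) ℂ ℂ).toLinearMap) C₁ B₁ C₂ B₂
        (ω₁ ∘ₗ (transposeLinearEquiv (Fin k₁) (Fin k₁) ℂ ℂ).toLinearMap)
        (ω₂ ∘ₗ (transposeLinearEquiv (Fin k₂) (Fin k₂) ℂ ℂ).toLinearMap) P₁ P₂ X := by
  have h13 : blk13 Xᵀ = blk31 X := rfl
  have h31 : blk31 Xᵀ = blk13 X := rfl
  have h23 : blk23 Xᵀ = blk32 X := rfl
  have h32 : blk32 Xᵀ = blk23 X := rfl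
  ext (p | p | _) (q | q | _) <;> simp [merging, h13, h31, h23, h32, add_comm] <;> rfl

variable {φ₁ φ₂ B₁ C₁ B₂ C₂ ω₁ ω₂ P₁ P₂}

theorem merging_C_eq_zero_of_is2Pos (h : Is2Pos (merging φ₁ φ₂ B₁ C₁ B₂ C₂ ω₁ ω₂ P₁ P₂)) :
    C₁ = 0 ∧ C₂ = 0 := by
  constructor
  · refine eq_zero_of_forall_star_dotProduct_mulVec_eq_zero fun y v => ?_
    have := h.dotProduct_eq_zero_of_re_eq_zero (u := blockVec 0 0 1) (x := blockVec y 0 0)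
      (by simp [rankOne, merging_mulVec_blockVec]) (blockVec (star v) 0 0) (blockVec 0 0 1)
    simpa [merging_mulVec_blockVec] using this
  · refine eq_zero_of_forall_star_dotProduct_mulVec_eq_zero fun y v => ?_
    have := h.dotProduct_eq_zero_of_re_eq_zero (u := blockVec 0 0 1) (x := blockVec 0 y 0)
      (by simp [rankOne, merging_mulVec_blockVec]) (blockVec 0 (star v) 0) (blockVec 0 0 1)
    simpa [merging_mulVec_blockVec] using this

theorem merging_epsQ_mul_le_deltaQ_mul_of_is2Pos
    (h : Is2Pos (merging φ₁ φ₂ B₁ 0 B₂ 0 ω₁ ω₂ P₁ P₂)) (η₁ : Fin k₁ → ℂ) (y₁ : Fin h₁ → ℂ)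
    (η₂ : Fin k₂ → ℂ) (y₂ : Fin h₂ → ℂ) :
    epsQ B₁ 0 η₁ y₁ * epsQ B₂ 0 η₂ y₂ ≤ deltaQ φ₁ B₁ 0 η₁ y₁ * deltaQ φ₂ B₂ 0 η₂ y₂ := by
  set β₁ := star y₁ ⬝ᵥ B₁ *ᵥ η₁ with hβ₁
  set β₂ := star y₂ ⬝ᵥ B₂ *ᵥ η₂ with hβ₂
  set m₁ := (star y₁ ⬝ᵥ φ₁ (rankOne η₁) *ᵥ y₁).re
  set m₂ := (star y₂ ⬝ᵥ φ₂ (rankOne η₂) *ᵥ y₂).re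
  have heps₁ : epsQ B₁ 0 η₁ y₁ = ‖β₁‖ := by simp [epsQ, hβ₁]
  have heps₂ : epsQ B₂ 0 η₂ y₂ = ‖β₂‖ := by simp [epsQ, hβ₂]
  let u : TI k₁ k₂ → ℂ := blockVec η₁ 0 1
  let v : TI k₁ k₂ → ℂ := blockVec 0 η₂ 1
  let x : TI h₁ h₂ → ℂ := blockVec y₁ 0 (-star β₁)
  let z : TI h₁ h₂ → ℂ := blockVec 0 y₂ (-star β₂)
  have hu : (star x ⬝ᵥ merging φ₁ φ₂ B₁ 0 B₂ 0 ω₁ ω₂ P₁ P₂ (rankOne u) *ᵥ x).re =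
      m₁ - ‖β₁‖ ^ 2 := by
    have : star x ⬝ᵥ merging φ₁ φ₂ B₁ 0 B₂ 0 ω₁ ω₂ P₁ P₂ (rankOne u) *ᵥ x =
        star y₁ ⬝ᵥ φ₁ (rankOne η₁) *ᵥ y₁ - ‖β₁‖ ^ 2 := by
      simp only [u, x, rankOne]
      simp [merging_mulVec_blockVec, vecMul_conjTranspose_dotProduct, ← hβ₁]
      linear_combination -Complex.mul_conj' β₁
    rw [this]
    norm_cast
  have hv : (star z ⬝ᵥ merging φ₁ φ₂ B₁ 0 B₂ 0 ω₁ ω₂ P₁ P₂ (rankOne v) *ᵥ z).re =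
      m₂ - ‖β₂‖ ^ 2 := by
    have : star z ⬝ᵥ merging φ₁ φ₂ B₁ 0 B₂ 0 ω₁ ω₂ P₁ P₂ (rankOne v) *ᵥ z =
        star y₂ ⬝ᵥ φ₂ (rankOne η₂) *ᵥ y₂ - ‖β₂‖ ^ 2 := by
      simp only [v, z, rankOne]
      simp [merging_mulVec_blockVec, vecMul_conjTranspose_dotProduct, ← hβ₂]
      linear_combination -Complex.mul_conj' β₂
    rw [this]
    norm_cast
  have huv : star x ⬝ᵥ merging φ₁ φ₂ B₁ 0 B₂ 0 ω₁ ω₂ P₁ P₂ (vecMulVec u (star v)) *ᵥ z =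
      -(β₁ * star β₂) := by
    simp [u, v, x, z, merging_mulVec_blockVec, vecMul_conjTranspose_dotProduct, ← hβ₁, ← hβ₂]
    ring
  have hcs := h.norm_dotProduct_vecMulVec_sq_le u v x z
  have hnn₁ := h.re_dotProduct_rankOne_nonneg u x
  have hnn₂ := h.re_dotProduct_rankOne_nonneg v z
  rw [hu, hv, huv] at hcs
  rw [hu] at hnn₁
  rw [hv] at hnn₂
  rw [deltaQ_eq_sqrt (by rw [heps₁]; linarith), deltaQ_eq_sqrt (by rw [heps₂]; linarith), heps₁,
    heps₂, ← Real.sqrt_mul hnn₁]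
  exact Real.le_sqrt_of_sq_le (by simpa [mul_pow] using hcs)

end Merging

theorem statement5_general {k₁ k₂ h₁ h₂ : ℕ}
    (φ₁ : Matrix (Fin k₁) (Fin k₁) ℂ →ₗ[ℂ] Matrix (Fin h₁) (Fin h₁) ℂ)
    (φ₂ : Matrix (Fin k₂) (Fin k₂) ℂ →ₗ[ℂ] Matrix (Fin h₂) (Fin h₂) ℂ)
    (B₁ C₁ : Matrix (Fin h₁) (Fin k₁) ℂ) (B₂ C₂ : Matrix (Fin h₂) (Fin k₂) ℂ)
    (ω₁ : Matrix (Fin k₁) (Fin k₁) ℂ →ₗ[ℂ] ℂ) (ω₂ : Matrix (Fin k₂) (Fin k₂) ℂ →ₗ[ℂ] ℂ)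
    (P₁ : Matrix (Fin h₁) (Fin h₁) ℂ) (P₂ : Matrix (Fin h₂) (Fin h₂) ℂ) :
    (Is2Pos (merging φ₁ φ₂ B₁ C₁ B₂ C₂ ω₁ ω₂ P₁ P₂) →
      (C₁ = 0 ∧ C₂ = 0) ∧
        ∀ (η₁ : Fin k₁ → ℂ) (y₁ : Fin h₁ → ℂ) (η₂ : Fin k₂ → ℂ) (y₂ : Fin h₂ → ℂ),
          epsQ B₁ C₁ η₁ y₁ * epsQ B₂ C₂ η₂ y₂ ≤
            deltaQ φ₁ B₁ C₁ η₁ y₁ * deltaQ φ₂ B₂ C₂ η₂ y₂) ∧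
    (Is2Copos (merging φ₁ φ₂ B₁ C₁ B₂ C₂ ω₁ ω₂ P₁ P₂) →
      (B₁ = 0 ∧ B₂ = 0) ∧
        ∀ (η₁ : Fin k₁ → ℂ) (y₁ : Fin h₁ → ℂ) (η₂ : Fin k₂ → ℂ) (y₂ : Fin h₂ → ℂ),
          epsQ B₁ C₁ η₁ y₁ * epsQ B₂ C₂ η₂ y₂ ≤
            deltaQ φ₁ B₁ C₁ η₁ y₁ * deltaQ φ₂ B₂ C₂ η₂ y₂) := by
  constructor
  · intro h
    obtain ⟨rfl, rfl⟩ := merging_C_eq_zero_of_is2Pos h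
    exact ⟨⟨rfl, rfl⟩, merging_epsQ_mul_le_deltaQ_mul_of_is2Pos h⟩
  · intro h
    have hT := h.is2Pos_comp_transpose
    simp only [merging_transpose] at hT
    obtain ⟨rfl, rfl⟩ := merging_C_eq_zero_of_is2Pos hT
    refine ⟨⟨rfl, rfl⟩, fun η₁ y₁ η₂ y₂ => ?_⟩
    simpa only [epsQ_star, deltaQ_comp_transpose_star] using
      merging_epsQ_mul_le_deltaQ_mul_of_is2Pos hT (star η₁) y₁ (star η₂) y₂

/-- If a positive merging is 2-positive then `C₁ = C₂ = 0` and
`δ₁δ₂ ≥ ε₁ε₂`; analogously, if it is 2-copositive then `B₁ = B₂ = 0` and the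
same inequality holds. -/
theorem statement5 {k₁ k₂ h₁ h₂ : ℕ}
    (φ₁ : Matrix (Fin k₁) (Fin k₁) ℂ →ₗ[ℂ] Matrix (Fin h₁) (Fin h₁) ℂ)
    (φ₂ : Matrix (Fin k₂) (Fin k₂) ℂ →ₗ[ℂ] Matrix (Fin h₂) (Fin h₂) ℂ)
    (hφ₁ : IsPosMap ⇑φ₁) (hφ₂ : IsPosMap ⇑φ₂)
    (B₁ C₁ : Matrix (Fin h₁) (Fin k₁) ℂ) (B₂ C₂ : Matrix (Fin h₂) (Fin k₂) ℂ)
    (ω₁ : Matrix (Fin k₁) (Fin k₁) ℂ →ₗ[ℂ] ℂ) (ω₂ : Matrix (Fin k₂) (Fin k₂) ℂ →ₗ[ℂ] ℂ)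
    (P₁ : Matrix (Fin h₁) (Fin h₁) ℂ) (P₂ : Matrix (Fin h₂) (Fin h₂) ℂ)
    (hP₁ : IsOrthProjOnRange P₁ (φ₁ 1)) (hP₂ : IsOrthProjOnRange P₂ (φ₂ 1))
    (hpos : IsPosMap (merging φ₁ φ₂ B₁ C₁ B₂ C₂ ω₁ ω₂ P₁ P₂)) :
    (Is2Pos (merging φ₁ φ₂ B₁ C₁ B₂ C₂ ω₁ ω₂ P₁ P₂) →
      (C₁ = 0 ∧ C₂ = 0) ∧
        ∀ (η₁ : Fin k₁ → ℂ) (y₁ : Fin h₁ → ℂ) (η₂ : Fin k₂ → ℂ) (y₂ : Fin h₂ → ℂ),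
          epsQ B₁ C₁ η₁ y₁ * epsQ B₂ C₂ η₂ y₂ ≤
            deltaQ φ₁ B₁ C₁ η₁ y₁ * deltaQ φ₂ B₂ C₂ η₂ y₂) ∧
    (Is2Copos (merging φ₁ φ₂ B₁ C₁ B₂ C₂ ω₁ ω₂ P₁ P₂) →
      (B₁ = 0 ∧ B₂ = 0) ∧
        ∀ (η₁ : Fin k₁ → ℂ) (y₁ : Fin h₁ → ℂ) (η₂ : Fin k₂ → ℂ) (y₂ : Fin h₂ → ℂ),
          epsQ B₁ C₁ η₁ y₁ * epsQ B₂ C₂ η₂ y₂ ≤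
            deltaQ φ₁ B₁ C₁ η₁ y₁ * deltaQ φ₂ B₂ C₂ η₂ y₂) :=
  statement5_general φ₁ φ₂ B₁ C₁ B₂ C₂ ω₁ ω₂ P₁ P₂

end Paper
end
end

section
/- Let K, H, K̃, H̃ be finite-dimensional complex Hilbert spaces and E : K̃ → K, F : H̃ → H injective linear operators. For a linear map φ̃ : B(K̃) → B(H̃), define L_{E,F}φ̃ : B(K) → B(H) by (L_{E,F}φ̃)(X) = F·φ̃(E*XE)·F*. If φ̃ is an exposed positive map, then L_{E,F}φ̃ is an exposed positive map. -/
open scoped ComplexOrder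
open Matrix

noncomputable section
/-!
The lifting factors as `X ↦ φ(Eᴴ X E)` followed by `Y ↦ F Y Fᴴ`, and each factor is handled
with a left inverse `G` of the injective matrix. Let `ψ` be positive with the zeros of the lifted
map. On the output side, `⟨y, ψ(ηη*) y⟩ = 0` for `y ∈ ker Fᴴ`, so the positive matrices `ψ(ηη*)`
live on the range of `F` and `ψ = F (G ψ Gᴴ) Fᴴ`. On the input side, `ψ(ζζ*) = 0` for
`ζ ∈ ker Eᴴ`; positivity then kills the cross terms, so `ψ(ηη*)` only depends on `Eᴴ η` and
`ψ X = ψ (Gᴴ (Eᴴ X E) G)`. In both cases the compressed map is positive and has the zeros of `φ`,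
hence is a nonnegative multiple of `φ`. Linear maps on matrices are compared on rank-one
projections, which span by polarization.
-/

theorem Complex.eq_zero_of_forall_nonneg_add_ofReal_mul {a b : ℂ}
    (h : ∀ t : ℝ, 0 ≤ a + t * b) : b = 0 := by
  have him : b.im = 0 := by
    have h1 := (Complex.nonneg_iff.mp (h 1)).2
    have h2 := (Complex.nonneg_iff.mp (h (-1))).2
    simp only [Complex.add_im, Complex.mul_im, Complex.ofReal_re, Complex.ofReal_im] at h1 h2
    linarith
  have hre : b.re = 0 := by
    by_contra hne
    have := (Complex.nonneg_iff.mp (h ((-a.re - 1) / b.re))).1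
    simp only [Complex.add_re, Complex.mul_re, Complex.ofReal_re, Complex.ofReal_im, him] at this
    rw [div_mul_cancel₀ _ hne] at this
    linarith
  exact Complex.ext hre him

namespace Matrix

theorem eq_zero_of_forall_dotProduct_mulVec_self {n : Type*} [Fintype n] [DecidableEq n]
    {M : Matrix n n ℂ} (h : ∀ y : n → ℂ, star y ⬝ᵥ M *ᵥ y = 0) : M = 0 := by
  have hT : M.toEuclideanLin = 0 := by
    refine (inner_map_self_eq_zero _).mp fun x => ?_
    rw [EuclideanSpace.inner_eq_star_dotProduct]
    have := congrArg star (h x.ofLp)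
    rwa [star_dotProduct, star_star, star_zero, dotProduct_comm] at this
  exact toEuclideanLin.injective (hT.trans (map_zero _).symm)

theorem eq_zero_of_forall_posSemidef_add_smul {n : Type*} [Fintype n] [DecidableEq n]
    {M N : Matrix n n ℂ} (h : ∀ t : ℝ, (M + (t : ℂ) • N).PosSemidef) : N = 0 := by
  refine eq_zero_of_forall_dotProduct_mulVec_self fun y =>
    Complex.eq_zero_of_forall_nonneg_add_ofReal_mul (a := star y ⬝ᵥ M *ᵥ y) fun t => ?_
  simpa only [add_mulVec, smul_mulVec, dotProduct_add, dotProduct_smul, smul_eq_mul] using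
    (h t).dotProduct_mulVec_nonneg y

theorem exists_mul_eq_one_of_injective {m n : Type*} [Fintype m] [Fintype n] [DecidableEq m]
    [DecidableEq n] {A : Matrix m n ℂ} (hA : Function.Injective A.mulVec) :
    ∃ G : Matrix n m ℂ, G * A = 1 := by
  obtain ⟨g, hg⟩ := A.mulVecLin.exists_leftInverse_of_injective (LinearMap.ker_eq_bot.mpr hA)
  refine ⟨LinearMap.toMatrix' g, ?_⟩
  rw [← LinearMap.toMatrix'_toLin' A, ← LinearMap.toMatrix'_comp]
  exact (congrArg LinearMap.toMatrix' hg).trans LinearMap.toMatrix'_id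

theorem dotProduct_mul_mul_conjTranspose_mulVec {m n : Type*} [Fintype m] [Fintype n]
    (A : Matrix n m ℂ) (M : Matrix m m ℂ) (y : n → ℂ) :
    star y ⬝ᵥ (A * M * Aᴴ) *ᵥ y = star (Aᴴ *ᵥ y) ⬝ᵥ M *ᵥ (Aᴴ *ᵥ y) := by
  simp only [star_mulVec, dotProduct_mulVec, vecMul_vecMul, conjTranspose_conjTranspose]

/-- `M` vanishes on `ker Aᴴ`, so it is supported on the range of `A`, where `A * G` is the
identity. -/
theorem PosSemidef.mul_mul_conjTranspose_eq_self {m n : Type*} [Fintype m] [Fintype n]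
    [DecidableEq m] {M : Matrix n n ℂ} (hM : M.PosSemidef) {A : Matrix n m ℂ}
    {G : Matrix m n ℂ} (hGA : G * A = 1) (hker : ∀ y, Aᴴ *ᵥ y = 0 → star y ⬝ᵥ M *ᵥ y = 0) :
    A * G * M * (A * G)ᴴ = M := by
  have hright : M * (A * G)ᴴ = M := by
    refine mulVec_injective (funext fun v => ?_)
    have hv : Aᴴ *ᵥ (v - (A * G)ᴴ *ᵥ v) = 0 := by
      rw [mulVec_sub, mulVec_mulVec, conjTranspose_mul, ← Matrix.mul_assoc,
        ← conjTranspose_mul, hGA, conjTranspose_one, Matrix.one_mul, sub_self]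
    have hMv := (hM.dotProduct_mulVec_zero_iff _).mp (hker _ hv)
    rw [mulVec_sub, sub_eq_zero] at hMv
    rw [← mulVec_mulVec, hMv]
  have hleft : A * G * M = M := by
    simpa [conjTranspose_mul, hM.isHermitian.eq, Matrix.mul_assoc] using
      congrArg (fun X => Xᴴ) hright
  rw [hleft, hright]

end Matrix

namespace Paper

@[simps]
def conjMap {m n : Type*} [Fintype m] (A : Matrix n m ℂ) :
    Matrix m m ℂ →ₗ[ℂ] Matrix n n ℂ where
  toFun X := A * X * Aᴴ
  map_add' X Y := by rw [Matrix.mul_add, Matrix.add_mul]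
  map_smul' c X := by rw [Matrix.mul_smul, Matrix.smul_mul]; rfl

theorem conjMap_mul {l m n : Type*} [Fintype l] [Fintype m] (A : Matrix n m ℂ)
    (B : Matrix m l ℂ) : conjMap (A * B) = conjMap A ∘ₗ conjMap B := by
  ext1 X
  simp only [conjMap_apply, LinearMap.comp_apply, conjTranspose_mul, Matrix.mul_assoc]

theorem conjMap_rankOne {m n : Type*} [Fintype m] (A : Matrix n m ℂ) (u : m → ℂ) :
    conjMap A (rankOne u) = rankOne (A *ᵥ u) := by
  rw [conjMap_apply, rankOne, rankOne, mul_vecMulVec, vecMulVec_mul, star_mulVec]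

theorem four_smul_vecMulVec_star {m : Type*} (u v : m → ℂ) :
    (4 : ℂ) • vecMulVec u (star v) = rankOne (u + v) - rankOne (u - v)
      + Complex.I • rankOne (u + Complex.I • v) - Complex.I • rankOne (u - Complex.I • v) := by
  ext a b
  simp only [rankOne, Matrix.smul_apply, Matrix.add_apply, Matrix.sub_apply, vecMulVec_apply,
    Pi.add_apply, Pi.sub_apply, Pi.smul_apply, Pi.star_apply, star_add, star_sub, star_smul,
    smul_eq_mul, Complex.star_def, Complex.conj_I]
  ring_nf
  rw [Complex.I_sq]
  ring

theorem linearMap_ext_rankOne {m M : Type*} [Fintype m] [DecidableEq m] [AddCommGroup M]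
    [Module ℂ M] {S T : Matrix m m ℂ →ₗ[ℂ] M} (h : ∀ η, S (rankOne η) = T (rankOne η)) :
    S = T := by
  have hvv : ∀ u v : m → ℂ, S (vecMulVec u (star v)) = T (vecMulVec u (star v)) := by
    intro u v
    have hpol : ∀ U : Matrix m m ℂ →ₗ[ℂ] M, (4 : ℂ) • U (vecMulVec u (star v)) =
        U (rankOne (u + v)) - U (rankOne (u - v)) + Complex.I • U (rankOne (u + Complex.I • v))
          - Complex.I • U (rankOne (u - Complex.I • v)) := fun U => by
      rw [← map_smul, four_smul_vecMulVec_star]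
      simp only [map_add, map_sub, map_smul]
    refine smul_right_injective M (four_ne_zero' ℂ) ?_
    simp only [hpol, h]
  apply Matrix.ext_linearMap
  intro i j
  apply LinearMap.ext_ring
  simpa [single_eq_single_vecMulVec_single, ← Pi.single_star] using
    hvv (Pi.single i 1) (Pi.single j 1)

theorem rankOne_add_ofReal_smul {m : Type*} (ξ ζ : m → ℂ) (t : ℝ) :
    rankOne (ξ + (t : ℂ) • ζ) = rankOne ξ
      + (t : ℂ) • (vecMulVec ξ (star ζ) + vecMulVec ζ (star ξ)) + ((t : ℂ) ^ 2) • rankOne ζ := by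
  ext a b
  simp only [rankOne, Matrix.smul_apply, Matrix.add_apply, vecMulVec_apply, Pi.add_apply,
    Pi.smul_apply, Pi.star_apply, star_add, star_smul, smul_eq_mul, Complex.star_def,
    Complex.conj_ofReal]
  ring

theorem IsPosMap.map_rankOne_add_of_map_rankOne_eq_zero {m n : Type*} [Fintype m] [Fintype n]
    [DecidableEq n] {ψ : Matrix m m ℂ →ₗ[ℂ] Matrix n n ℂ} (hψ : IsPosMap ψ) {ζ : m → ℂ}
    (hζ : ψ (rankOne ζ) = 0) (ξ : m → ℂ) : ψ (rankOne (ξ + ζ)) = ψ (rankOne ξ) := by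
  have hψt : ∀ t : ℝ, ψ (rankOne (ξ + (t : ℂ) • ζ)) = ψ (rankOne ξ)
      + (t : ℂ) • ψ (vecMulVec ξ (star ζ) + vecMulVec ζ (star ξ)) := fun t => by
    rw [rankOne_add_ofReal_smul, map_add, map_add, map_smul, map_smul, hζ, smul_zero, add_zero]
  have hcross := Matrix.eq_zero_of_forall_posSemidef_add_smul fun t =>
    hψt t ▸ hψ _ (posSemidef_vecMulVec_self_star _)
  simpa [hcross] using hψt 1

theorem IsExposed.mul_mul_conjTranspose_same {m n n' : Type*} [Fintype m] [DecidableEq m]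
    [Fintype n] [DecidableEq n] [Fintype n'] [DecidableEq n']
    {φ : Matrix m m ℂ → Matrix n' n' ℂ} (hφ : IsExposed φ) {F : Matrix n n' ℂ}
    (hF : Function.Injective F.mulVec) : IsExposed fun X : Matrix m m ℂ => F * φ X * Fᴴ := by
  refine ⟨fun X hX => (hφ.1 X hX).mul_mul_conjTranspose_same F, fun ψ hψ hz => ?_⟩
  obtain ⟨G, hGF⟩ := exists_mul_eq_one_of_injective hF
  have hFG : ∀ y, Fᴴ *ᵥ (Gᴴ *ᵥ y) = y := fun y => by
    rw [mulVec_mulVec, ← conjTranspose_mul, hGF, conjTranspose_one, one_mulVec]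
  have hrange : conjMap (F * G) ∘ₗ ψ = ψ := linearMap_ext_rankOne fun η =>
    (hψ _ (posSemidef_vecMulVec_self_star η)).mul_mul_conjTranspose_eq_self hGF fun y hy =>
      hz η y (by simp [dotProduct_mul_mul_conjTranspose_mulVec, hy])
  have hψ'pos : IsPosMap (conjMap G ∘ₗ ψ) := fun X hX =>
    (hψ X hX).mul_mul_conjTranspose_same G
  have hψ'zero : ∀ η y, star y ⬝ᵥ φ (rankOne η) *ᵥ y = 0 →
      star y ⬝ᵥ (conjMap G ∘ₗ ψ) (rankOne η) *ᵥ y = 0 := fun η y hy => by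
    have := hz η (Gᴴ *ᵥ y) (by rwa [dotProduct_mul_mul_conjTranspose_mulVec, hFG])
    rwa [LinearMap.comp_apply, conjMap_apply, dotProduct_mul_mul_conjTranspose_mulVec]
  obtain ⟨c, hc, hψ'⟩ := hφ.2 _ hψ'pos hψ'zero
  refine ⟨c, hc, fun X => ?_⟩
  rw [← hrange, conjMap_mul, LinearMap.comp_apply, LinearMap.comp_apply,
    ← LinearMap.comp_apply _ ψ, hψ', map_smul, conjMap_apply]

theorem IsExposed.conjTranspose_mul_mul_same {m m' n : Type*} [Fintype m] [DecidableEq m]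
    [Fintype m'] [DecidableEq m'] [Fintype n] [DecidableEq n]
    {φ : Matrix m' m' ℂ →ₗ[ℂ] Matrix n n ℂ} (hφ : IsExposed φ) {E : Matrix m m' ℂ}
    (hE : Function.Injective E.mulVec) : IsExposed fun X : Matrix m m ℂ => φ (Eᴴ * X * E) := by
  refine ⟨fun X hX => hφ.1 _ (hX.conjTranspose_mul_mul_same E), fun ψ hψ hz => ?_⟩
  obtain ⟨G, hGE⟩ := exists_mul_eq_one_of_injective hE
  have hEG : ∀ ζ, Eᴴ *ᵥ (Gᴴ *ᵥ ζ) = ζ := fun ζ => by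
    rw [mulVec_mulVec, ← conjTranspose_mul, hGE, conjTranspose_one, one_mulVec]
  have hconj : ∀ η, Eᴴ * rankOne η * E = rankOne (Eᴴ *ᵥ η) := fun η => by
    simpa using conjMap_rankOne Eᴴ η
  have hker : ∀ ζ, Eᴴ *ᵥ ζ = 0 → ψ (rankOne ζ) = 0 := fun ζ hζ =>
    eq_zero_of_forall_dotProduct_mulVec_self fun y => hz ζ y (by
      change star y ⬝ᵥ φ (Eᴴ * rankOne ζ * E) *ᵥ y = 0
      rw [hconj, hζ]
      simp [rankOne])
  have hproj : ψ ∘ₗ conjMap Gᴴ ∘ₗ conjMap Eᴴ = ψ := linearMap_ext_rankOne fun η => by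
    have hζ : Eᴴ *ᵥ (η - Gᴴ *ᵥ (Eᴴ *ᵥ η)) = 0 := by rw [mulVec_sub, hEG, sub_self]
    have := hψ.map_rankOne_add_of_map_rankOne_eq_zero (hker _ hζ) (Gᴴ *ᵥ (Eᴴ *ᵥ η))
    rw [add_sub_cancel] at this
    rw [LinearMap.comp_apply, LinearMap.comp_apply, conjMap_rankOne, conjMap_rankOne, this]
  have hψ'pos : IsPosMap (ψ ∘ₗ conjMap Gᴴ) := fun Y hY =>
    hψ _ (hY.mul_mul_conjTranspose_same Gᴴ)
  have hψ'zero : ∀ ζ y, star y ⬝ᵥ φ (rankOne ζ) *ᵥ y = 0 →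
      star y ⬝ᵥ (ψ ∘ₗ conjMap Gᴴ) (rankOne ζ) *ᵥ y = 0 := fun ζ y hy => by
    rw [LinearMap.comp_apply, conjMap_rankOne]
    exact hz _ y (by
      change star y ⬝ᵥ φ (Eᴴ * rankOne _ * E) *ᵥ y = 0
      rwa [hconj, hEG])
  obtain ⟨c, hc, hψ'⟩ := hφ.2 _ hψ'pos hψ'zero
  refine ⟨c, hc, fun X => ?_⟩
  rw [← hproj]
  simpa using hψ' (Eᴴ * X * E)

/-- Lifting lemma. If `E`, `F` are injective and `φ̃` is an
exposed positive map, then `X ↦ F φ̃(E*XE) F*` is an exposed positive map. -/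
theorem statement8 {k k' h h' : ℕ}
    (E : Matrix (Fin k) (Fin k') ℂ) (F : Matrix (Fin h) (Fin h') ℂ)
    (hE : Function.Injective E.mulVec) (hF : Function.Injective F.mulVec)
    (φ : Matrix (Fin k') (Fin k') ℂ →ₗ[ℂ] Matrix (Fin h') (Fin h') ℂ)
    (hφ : IsExposed ⇑φ) :
    IsExposed fun X : Matrix (Fin k) (Fin k) ℂ => F * φ (Eᴴ * X * E) * Fᴴ :=
  (hφ.conjTranspose_mul_mul_same hE).mul_mul_conjTranspose_same hF

end Paper
end
end

section
/- Let K = ⊕_{i=1}^n K_i and H = ⊕_{i=1}^n H_i be orthogonal direct sums of finite-dimensional complex Hilbert spaces, and let φ : B(K) → B(H) be a positive map such that φ(B(K_i)) ⊆ B(H_i) for each i (i.e., φ maps operators supported on the i-th diagonal block to operators supported on the i-th diagonal block). Then for all i ≠ j, φ maps B(K_j, K_i) (operators supported on block (i,j)) into B(H_j, H_i) ⊕ B(H_i, H_j) (operators supported on the union of blocks (i,j) and (j,i)). -/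
open scoped ComplexOrder
open Matrix

noncomputable section
/-!
Let `P` be the projection onto the `i`-th summand, so that `X = P X`. For every real `s`,
`(P + s X)ᴴ (P + s X) = P + s (X + Xᴴ) + s² XᴴX` is positive, hence so is
`φ P + s φ (X + Xᴴ) + s² φ (XᴴX)`. Here `φ P` lives on block `(i, i)` and `φ (XᴴX)` on block
`(j, j)`, so on the principal submatrix avoiding the indices of block `i` (resp. `j`) the
constant (resp. quadratic) coefficient vanishes, and a real quadratic that is nonnegative
everywhere with such a vanishing coefficient has no linear term. Thus `φ (X + Xᴴ)`, and with
`I • X` in place of `X` also `φ X`, vanishes on both submatrices, and every entry outside the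
blocks `(i, j)`, `(j, i)` lies in one of them.
-/

theorem Complex.eq_zero_of_forall_real_quadratic_nonneg {a d c : ℂ} (hac : a = 0 ∨ c = 0)
    (h : ∀ s : ℝ, 0 ≤ a + s * d + s ^ 2 * c) : d = 0 := by
  -- `0 ≤ z` in `ℂ` also says `z.im = 0`.
  have hs : ∀ s : ℝ, 0 ≤ c.re * (s * s) + d.re * s + a.re ∧ a.im + s * d.im + s * s * c.im = 0 :=
    fun s => by
      have := Complex.le_def.mp (h s)
      simp only [pow_two, Complex.zero_re, Complex.zero_im, Complex.add_re, Complex.add_im,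
        Complex.mul_re, Complex.mul_im, Complex.ofReal_re, Complex.ofReal_im] at this
      constructor <;> linarith [this.1, this.2]
  have hdre : d.re = 0 := by
    have hac' : c.re * a.re = 0 := by rcases hac with rfl | rfl <;> simp
    have := discrim_le_zero fun s => (hs s).1
    rwa [discrim, mul_assoc, hac', mul_zero, sub_zero, _root_.sq_nonpos_iff] at this
  have hdim : d.im = 0 := by linear_combination ((hs 1).2 - (hs (-1)).2) / 2
  exact Complex.ext hdre hdim

namespace Matrix

variable {n : Type*} [Fintype n]

theorem eq_zero_of_forall_star_dotProduct_mulVec_eq_zero_s9 {D : Matrix n n ℂ}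
    (h : ∀ v, star v ⬝ᵥ D *ᵥ v = 0) : D = 0 := by
  classical
  apply (toLpLin 2 2).injective
  rw [map_zero, ← inner_map_self_eq_zero]
  intro x
  simp only [EuclideanSpace.inner_eq_star_dotProduct, ofLp_toLpLin, toLin'_apply]
  rw [dotProduct_star, dotProduct_comm, h, star_zero]

theorem eq_zero_of_forall_real_quadratic_posSemidef {A D C : Matrix n n ℂ} (hAC : A = 0 ∨ C = 0)
    (h : ∀ s : ℝ, (A + (s : ℂ) • D + (s : ℂ) ^ 2 • C).PosSemidef) : D = 0 := by
  refine eq_zero_of_forall_star_dotProduct_mulVec_eq_zero_s9 fun v => ?_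
  refine Complex.eq_zero_of_forall_real_quadratic_nonneg (a := star v ⬝ᵥ A *ᵥ v)
    (c := star v ⬝ᵥ C *ᵥ v) ?_ fun s => ?_
  · rcases hAC with rfl | rfl <;> simp
  · simpa only [add_mulVec, smul_mulVec, dotProduct_add, dotProduct_smul, smul_eq_mul]
      using (h s).dotProduct_mulVec_nonneg v

theorem posSemidef_add_smul_add_sq_smul {P X : Matrix n n ℂ} (hP : Pᴴ = P) (hPP : P * P = P)
    (hPX : P * X = X) (s : ℝ) :
    (P + (s : ℂ) • (X + Xᴴ) + (s : ℂ) ^ 2 • (Xᴴ * X)).PosSemidef := by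
  have hXP : Xᴴ * P = Xᴴ := by rw [← hP, ← conjTranspose_mul, hPX]
  convert posSemidef_conjTranspose_mul_self (P + (s : ℂ) • X) using 1
  simp only [conjTranspose_add, conjTranspose_smul, hP, add_mul, mul_add, Matrix.smul_mul,
    Matrix.mul_smul, hPP, hPX, hXP, smul_smul, Complex.star_def, Complex.conj_ofReal]
  module

end Matrix

namespace Paper

variable {m n l : Type*} [Fintype m] [Fintype n] [Fintype l]
  {φ : Matrix m m ℂ →ₗ[ℂ] Matrix n n ℂ} {P X : Matrix m m ℂ} (e : l → n)

theorem IsPosMap.submatrix_map_add_conjTranspose_eq_zero (hφ : IsPosMap ⇑φ)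
    (hP : Pᴴ = P) (hPP : P * P = P) (hPX : P * X = X)
    (he : (φ P).submatrix e e = 0 ∨ (φ (Xᴴ * X)).submatrix e e = 0) :
    (φ (X + Xᴴ)).submatrix e e = 0 :=
  eq_zero_of_forall_real_quadratic_posSemidef he fun s => by
    simpa only [map_add, map_smul, submatrix_add, submatrix_smul, Pi.add_apply, Pi.smul_apply]
      using (hφ _ (posSemidef_add_smul_add_sq_smul hP hPP hPX s)).submatrix e

theorem IsPosMap.submatrix_map_eq_zero (hφ : IsPosMap ⇑φ)
    (hP : Pᴴ = P) (hPP : P * P = P) (hPX : P * X = X)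
    (he : (φ P).submatrix e e = 0 ∨ (φ (Xᴴ * X)).submatrix e e = 0) :
    (φ X).submatrix e e = 0 := by
  have hIX : (Complex.I • X)ᴴ * (Complex.I • X) = Xᴴ * X := by
    simp [conjTranspose_smul, Matrix.smul_mul, Matrix.mul_smul, smul_smul]
  have hre := hφ.submatrix_map_add_conjTranspose_eq_zero e hP hPP hPX he
  have him := hφ.submatrix_map_add_conjTranspose_eq_zero e hP hPP
    (by rw [Matrix.mul_smul, hPX]) (hIX ▸ he)
  simp only [conjTranspose_smul, Complex.star_def, Complex.conj_I, map_add, map_smul,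
    submatrix_add, submatrix_smul, Pi.add_apply, Pi.smul_apply] at hre him
  linear_combination (norm := match_scalars <;> ring_nf <;> simp [Complex.I_sq])
    (1 / 2 : ℂ) • hre - (Complex.I / 2) • him

theorem IsPosMap.map_apply_eq_zero (hφ : IsPosMap ⇑φ)
    (hP : Pᴴ = P) (hPP : P * P = P) (hPX : P * X = X) {p : n → Prop}
    (hp : (∀ u v, p u → p v → φ P u v = 0) ∨ ∀ u v, p u → p v → φ (Xᴴ * X) u v = 0)
    {u v : n} (hu : p u) (hv : p v) : φ X u v = 0 := by
  classical
  have he : ∀ G : Matrix n n ℂ, (∀ u v, p u → p v → G u v = 0) →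
      G.submatrix (Subtype.val : {u // p u} → n) Subtype.val = 0 :=
    fun G hG => by ext u v; exact hG _ _ u.2 v.2
  exact congrFun₂ (hφ.submatrix_map_eq_zero _ hP hPP hPX (hp.imp (he _) (he _))) ⟨u, hu⟩ ⟨v, hv⟩

/-- Lemma on off-diagonal blocks. If a positive map `φ` on a
direct sum maps each diagonal block into the corresponding diagonal block, then
it maps each off-diagonal block `(i,j)` into the union of the blocks `(i,j)`
and `(j,i)`. -/
theorem statement9 {N : ℕ} (k h : Fin N → ℕ)
    (φ : Matrix ((i : Fin N) × Fin (k i)) ((i : Fin N) × Fin (k i)) ℂ →ₗ[ℂ]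
      Matrix ((i : Fin N) × Fin (h i)) ((i : Fin N) × Fin (h i)) ℂ)
    (hpos : IsPosMap ⇑φ)
    (hdiag : ∀ i : Fin N, ∀ X, (∀ a b, ¬(a.1 = i ∧ b.1 = i) → X a b = 0) →
      ∀ a b, ¬(a.1 = i ∧ b.1 = i) → φ X a b = 0) :
    ∀ i j : Fin N, i ≠ j → ∀ X, (∀ a b, ¬(a.1 = i ∧ b.1 = j) → X a b = 0) →
      ∀ a b, ¬((a.1 = i ∧ b.1 = j) ∨ (a.1 = j ∧ b.1 = i)) → φ X a b = 0 := by
  classical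
  intro i j hij X hX a b hab
  set P := diagonal fun u : (i : Fin N) × Fin (k i) => if u.1 = i then (1 : ℂ) else 0
  have hP : Pᴴ = P := by simp [P, diagonal_conjTranspose, apply_ite star]
  have hPP : P * P = P := by simp [P, diagonal_mul_diagonal]
  have hPX : P * X = X := by
    ext u v
    by_cases hu : u.1 = i <;> simp [P, hu, hX u v]
  have hPsupp : ∀ u v, ¬(u.1 = i ∧ v.1 = i) → P u v = 0 := by
    intro u v huv
    by_cases huv' : u = v <;> simp_all [P]
  have hQsupp : ∀ u v, ¬(u.1 = j ∧ v.1 = j) → (Xᴴ * X) u v = 0 := by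
    intro u v huv
    refine Finset.sum_eq_zero fun w _ => ?_
    by_cases hu : u.1 = j
    · simp [hX w v fun hw => huv ⟨hu, hw.2⟩]
    · simp [hX w u fun hw => hu hw.2]
  rcases (show (a.1 ≠ i ∧ b.1 ≠ i) ∨ (a.1 ≠ j ∧ b.1 ≠ j) by grind) with ⟨ha, hb⟩ | ⟨ha, hb⟩
  · exact hpos.map_apply_eq_zero hP hPP hPX (p := (·.1 ≠ i))
      (.inl fun u v hu _ => hdiag i P hPsupp u v (hu ·.1)) ha hb
  · exact hpos.map_apply_eq_zero hP hPP hPX (p := (·.1 ≠ j))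
      (.inr fun u v hu _ => hdiag j _ hQsupp u v (hu ·.1)) ha hb

end Paper
end
end

section
/- Let K = K₁ ⊕ ℂε and H = H₁ ⊕ ℂe, where ε ∈ K and e ∈ H are unit vectors, K₁, H₁ finite-dimensional complex Hilbert spaces. Let φ : B(K) → B(H) be a positive map with φ(B(K₁)) ⊆ B(H₁) and φ(B(ℂε)) ⊆ B(ℂe). Then there exist linear maps R, Q : K₁ → H₁ such that φ(ηε*) = (Rη)e* + e(Qη̄)* for all η ∈ K₁. -/
/-!
For `y ∈ H` the functional `X ↦ ⟨y, φ(X) y⟩` is positive, so by Cauchy–Schwarz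
`⟨y, φ(ηε*) y⟩` vanishes as soon as `⟨y, φ(ηη*) y⟩` or `⟨y, φ(εε*) y⟩` does. The block
hypotheses give the second for `y ∈ H₁` and the first for `y = e`; by polarization the
`H₁`-block and the `e`-corner of `φ(ηε*)` vanish, and what is left are the two
off-diagonal blocks, both linear in `η`.
-/

open scoped ComplexOrder
open Matrix

noncomputable section
namespace Paper

/-- The distinguished unit vector spanning the one-dimensional summand of
`ℂᵏ ⊕ ℂ`. -/
def unitVec (k : ℕ) : (Fin k ⊕ Unit) → ℂ := Sum.elim 0 fun _ => 1

theorem _root_.Real.eq_zero_of_forall_quadratic_nonneg {f s g : ℝ} (hfg : f * g = 0)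
    (h : ∀ t : ℝ, 0 ≤ f * (t * t) + s * t + g) : s = 0 := by
  have hd := discrim_le_zero h
  rw [discrim, mul_assoc, hfg] at hd
  nlinarith [sq_nonneg s]

theorem _root_.Complex.eq_zero_of_forall_real_quadratic_nonneg_s10 {f s g : ℂ}
    (hfg : f = 0 ∨ g = 0)
    (h : ∀ t : ℝ, 0 ≤ f * (t * t) + s * t + g) : s = 0 := by
  have hre : f.re * g.re = 0 := by rcases hfg with rfl | rfl <;> simp
  have him : f.im * g.im = 0 := by rcases hfg with rfl | rfl <;> simp
  refine Complex.ext (Real.eq_zero_of_forall_quadratic_nonneg hre fun t => ?_)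
    (Real.eq_zero_of_forall_quadratic_nonneg him fun t => ?_)
  · simpa using (Complex.nonneg_iff.mp (h t)).1
  · simpa using (Complex.nonneg_iff.mp (h t)).2.le

theorem _root_.Complex.eq_zero_of_forall_sesquilinear_nonneg {f a b g : ℂ}
    (hfg : f = 0 ∨ g = 0)
    (h : ∀ z : ℂ, 0 ≤ f * (star z * z) + a * z + b * star z + g) : a = 0 := by
  have hsum : a + b = 0 := Complex.eq_zero_of_forall_real_quadratic_nonneg_s10 hfg fun t => by
    simpa [Complex.conj_ofReal, add_mul, add_assoc] using h t
  have hdiff : (a - b) * Complex.I = 0 :=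
    Complex.eq_zero_of_forall_real_quadratic_nonneg_s10 hfg fun t => by
      convert h (t * Complex.I) using 1
      simp only [star_mul', Complex.star_def, Complex.conj_ofReal, Complex.conj_I]
      linear_combination (f * t * t) * Complex.I_mul_I
  linear_combination (hsum - Complex.I * hdiff) / 2 + (a - b) / 2 * Complex.I_mul_I

theorem _root_.Matrix.eq_zero_of_forall_dotProduct_mulVec_self_eq_zero {n : Type*} [Fintype n]
    [DecidableEq n] {N : Matrix n n ℂ} (h : ∀ w : n → ℂ, star w ⬝ᵥ N *ᵥ w = 0) : N = 0 := by
  have := (inner_map_self_eq_zero N.toEuclideanLin).mp fun x => by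
    rw [EuclideanSpace.inner_eq_star_dotProduct, dotProduct_star, star_eq_zero, dotProduct_comm]
    simpa using h x
  simpa using this

theorem _root_.Matrix.vecMulVec_smul_add_self_star {m : Type*} (z : ℂ) (u v : m → ℂ) :
    vecMulVec (z • u + v) (star (z • u + v)) = (star z * z) • vecMulVec u (star u) +
      z • vecMulVec u (star v) + star z • vecMulVec v (star u) + vecMulVec v (star v) := by
  simp only [star_add, star_smul, add_vecMulVec, vecMulVec_add, smul_vecMulVec, vecMulVec_smul,
    smul_add, smul_smul]
  abel

/-- The degenerate case of Cauchy–Schwarz for the positive functional `X ↦ ⟨y, φ(X) y⟩`. -/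
theorem IsPosMap.dotProduct_mulVec_vecMulVec_eq_zero {m n : Type*} [Fintype m] [Fintype n]
    {φ : Matrix m m ℂ →ₗ[ℂ] Matrix n n ℂ} (hφ : IsPosMap ⇑φ) {u v : m → ℂ} {y : n → ℂ}
    (h : star y ⬝ᵥ φ (vecMulVec u (star u)) *ᵥ y = 0 ∨
      star y ⬝ᵥ φ (vecMulVec v (star v)) *ᵥ y = 0) :
    star y ⬝ᵥ φ (vecMulVec u (star v)) *ᵥ y = 0 := by
  refine Complex.eq_zero_of_forall_sesquilinear_nonneg
    (b := star y ⬝ᵥ φ (vecMulVec v (star u)) *ᵥ y) h fun z => ?_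
  have := (hφ _ (posSemidef_vecMulVec_self_star (z • u + v))).dotProduct_mulVec_nonneg y
  rw [vecMulVec_smul_add_self_star] at this
  simpa [add_mulVec, smul_mulVec, dotProduct_add, dotProduct_smul, mul_comm] using this

theorem _root_.Matrix.star_sumElim_zero_dotProduct_mulVec {m o : Type*} [Fintype m]
    [Fintype o]
    (M : Matrix (m ⊕ o) (m ⊕ o) ℂ) (w : m → ℂ) :
    star (Sum.elim w 0) ⬝ᵥ M *ᵥ Sum.elim w 0 = star w ⬝ᵥ M.toBlocks₁₁ *ᵥ w := by
  simp [dotProduct, mulVec, Fintype.sum_sum_type, toBlocks₁₁]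

theorem star_unitVec_dotProduct_mulVec_unitVec {h : ℕ}
    (M : Matrix (Fin h ⊕ Unit) (Fin h ⊕ Unit) ℂ) :
    star (unitVec h) ⬝ᵥ M *ᵥ unitVec h = M (Sum.inr ()) (Sum.inr ()) := by
  simp [dotProduct, mulVec, Fintype.sum_sum_type, unitVec]

theorem eq_vecMulVec_unitVec_add_vecMulVec {h : ℕ}
    (M : Matrix (Fin h ⊕ Unit) (Fin h ⊕ Unit) ℂ)
    (h₁₁ : M.toBlocks₁₁ = 0) (h₂₂ : M (Sum.inr ()) (Sum.inr ()) = 0) :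
    M = vecMulVec (Sum.elim (fun a => M (Sum.inl a) (Sum.inr ())) 0) (star (unitVec h)) +
      vecMulVec (unitVec h)
        (star (Sum.elim (star fun b => M (Sum.inr ()) (Sum.inl b)) 0)) := by
  ext (a | ⟨⟩) (b | ⟨⟩)
  · simpa [vecMulVec_apply, unitVec, toBlocks₁₁] using congr_fun₂ h₁₁ a b
  · simp [vecMulVec_apply, unitVec]
  · simp [vecMulVec_apply, unitVec]
  · simpa [vecMulVec_apply, unitVec] using h₂₂

theorem _root_.Matrix.exists_mulVec_star_eq_star {m n : Type*} [Fintype m] [DecidableEq m]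
    (L : (m → ℂ) →ₗ[ℂ] n → ℂ) : ∃ Q : Matrix n m ℂ, ∀ η, Q *ᵥ star η = star (L η) :=
  ⟨(LinearMap.toMatrix' L)ᴴᵀ, fun η => by
    rw [← vecMul_transpose, transpose_transpose, ← star_mulVec, LinearMap.toMatrix'_mulVec]⟩

/-- `η ↦ ηε*` for `η ∈ K₁ ⊆ K`. -/
def outerUnitVec (k : ℕ) : (Fin k → ℂ) →ₗ[ℂ] Matrix (Fin k ⊕ Unit) (Fin k ⊕ Unit) ℂ where
  toFun η := vecMulVec (Sum.elim η 0) (star (unitVec k))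
  map_add' η ζ := by ext (i | i) j <;> simp [vecMulVec_apply, add_mul]
  map_smul' c η := by ext (i | i) j <;> simp [vecMulVec_apply, mul_assoc]

/-- Corollary. Let `φ : B(K₁ ⊕ ℂε) → B(H₁ ⊕ ℂe)` be a
positive map preserving the two diagonal blocks. Then there are linear maps
`R, Q : K₁ → H₁` with `φ(ηε*) = (Rη)e* + e(Qη̄)*` for all `η ∈ K₁`. -/
theorem statement10 {k h : ℕ}
    (φ : Matrix (Fin k ⊕ Unit) (Fin k ⊕ Unit) ℂ →ₗ[ℂ]
      Matrix (Fin h ⊕ Unit) (Fin h ⊕ Unit) ℂ)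
    (hpos : IsPosMap ⇑φ)
    (h1 : ∀ X : Matrix (Fin k ⊕ Unit) (Fin k ⊕ Unit) ℂ,
      ((∀ b, X (Sum.inr ()) b = 0) ∧ (∀ a, X a (Sum.inr ()) = 0)) →
      (∀ b, φ X (Sum.inr ()) b = 0) ∧ (∀ a, φ X a (Sum.inr ()) = 0))
    (h2 : ∀ X : Matrix (Fin k ⊕ Unit) (Fin k ⊕ Unit) ℂ,
      ((∀ (a : Fin k) (b), X (Sum.inl a) b = 0) ∧ (∀ (a) (b : Fin k), X a (Sum.inl b) = 0)) →
      (∀ (a : Fin h) (b), φ X (Sum.inl a) b = 0) ∧ (∀ (a) (b : Fin h), φ X a (Sum.inl b) = 0)) :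
    ∃ R Q : Matrix (Fin h) (Fin k) ℂ, ∀ η : Fin k → ℂ,
      φ (Matrix.vecMulVec (Sum.elim η 0) (star (unitVec k))) =
        Matrix.vecMulVec (Sum.elim (R.mulVec η) 0) (star (unitVec h)) +
          Matrix.vecMulVec (unitVec h) (star (Sum.elim (Q.mulVec (star η)) 0)) := by
  have hcorner (η : Fin k → ℂ) : φ (outerUnitVec k η) (Sum.inr ()) (Sum.inr ()) = 0 := by
    rw [← star_unitVec_dotProduct_mulVec_unitVec (φ (outerUnitVec k η))]
    refine hpos.dotProduct_mulVec_vecMulVec_eq_zero (Or.inl ?_)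
    rw [star_unitVec_dotProduct_mulVec_unitVec]
    exact (h1 _ ⟨fun b => by simp [vecMulVec_apply], fun a => by simp [vecMulVec_apply]⟩).1 _
  have hblock (η : Fin k → ℂ) : (φ (outerUnitVec k η)).toBlocks₁₁ = 0 := by
    have hε : (φ (vecMulVec (unitVec k) (star (unitVec k)))).toBlocks₁₁ = 0 := by
      ext a b
      exact (h2 _ ⟨fun a b => by simp [vecMulVec_apply, unitVec],
        fun a b => by simp [vecMulVec_apply, unitVec]⟩).1 a _
    refine eq_zero_of_forall_dotProduct_mulVec_self_eq_zero fun w => ?_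
    rw [← star_sumElim_zero_dotProduct_mulVec]
    refine hpos.dotProduct_mulVec_vecMulVec_eq_zero (Or.inr ?_)
    simp [star_sumElim_zero_dotProduct_mulVec, hε]
  let entries (p : Fin h → Fin h ⊕ Unit) (q : Fin h → Fin h ⊕ Unit) :
      (Fin k → ℂ) →ₗ[ℂ] Fin h → ℂ :=
    (LinearMap.pi fun a => entryLinearMap ℂ ℂ (p a) (q a)) ∘ₗ φ ∘ₗ outerUnitVec k
  obtain ⟨Q, hQ⟩ := exists_mulVec_star_eq_star (entries (fun _ => Sum.inr ()) Sum.inl)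
  refine ⟨LinearMap.toMatrix' (entries Sum.inl fun _ => Sum.inr ()), Q, fun η => ?_⟩
  rw [LinearMap.toMatrix'_mulVec, hQ]
  exact eq_vecMulVec_unitVec_add_vecMulVec _ (hblock η) (hcorner η)

end Paper
end
end
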